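/- arXiv:2209.07583 — 10 statements merged into one kernel-verified Lean document; each statement's English description precedes it below -/
import Mathlib

section
/- Let X be a topological space and let U_1, …, U_n ⊆ X be sets that are either all open or all closed. Let σ, τ ⊆ {1,…,n}, let p_σ be a point of the atom A_σ and p_τ a point of the atom A_τ, and suppose there is a continuous path γ : [0,1] → X with γ(0) = p_σ, γ(1) = p_τ, and γ([0,1]) ⊆ A_σ ∪ A_τ. Then σ ⊆ τ or τ ⊆ σ. -/
/-!
Suppose `i ∈ σ \ τ` and `j ∈ τ \ σ`. Every point of `A_σ ∪ A_τ` lies in exactly one of `U_i`,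
`U_j`, so the path image, being connected, lies in one of them; but it contains `p_σ ∈ U_i \ U_j`
and `p_τ ∈ U_j \ U_i`.
-/

open scoped symmDiff

/-- The atom of a subset `σ` of neurons with respect to a family of sets `U`:
`A_σ = (⋂_{i ∈ σ} U_i) \ (⋃_{j ∉ σ} U_j)`. -/
def atomOf {n : ℕ} {X : Type*} (U : Fin n → Set X) (σ : Set (Fin n)) : Set X :=
  (⋂ i ∈ σ, U i) \ (⋃ j ∈ σᶜ, U j)

theorem IsPreconnected.subset_or_subset_of_subset_symmDiff {X : Type*} [TopologicalSpace X]
    {S A B : Set X} (hS : IsPreconnected S)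
    (hAB : (IsOpen A ∧ IsOpen B) ∨ (IsClosed A ∧ IsClosed B)) (hsub : S ⊆ A ∆ B) :
    S ⊆ A ∨ S ⊆ B := by
  have hcover : S ⊆ A ∪ B := hsub.trans Set.symmDiff_subset_union
  have hdisj : S ∩ (A ∩ B) = ∅ := by
    ext x
    simp only [Set.mem_inter_iff, Set.mem_empty_iff_false, iff_false]
    rintro ⟨hxS, hxA, hxB⟩
    rcases Set.mem_symmDiff.mp (hsub hxS) with h | h
    exacts [h.2 hxB, h.2 hxA]
  rcases hAB with ⟨hA, hB⟩ | ⟨hA, hB⟩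
  · exact isPreconnected_iff_subset_of_disjoint.mp hS A B hA hB hcover hdisj
  · exact isPreconnected_iff_subset_of_disjoint_closed.mp hS A B hA hB hcover hdisj

section Atoms

variable {n : ℕ} {X : Type*} {U : Fin n → Set X} {σ : Set (Fin n)} {x : X}

theorem mem_of_mem_atomOf (hx : x ∈ atomOf U σ) {i : Fin n} (hi : i ∈ σ) : x ∈ U i :=
  Set.mem_iInter₂.mp hx.1 i hi

theorem notMem_of_mem_atomOf (hx : x ∈ atomOf U σ) {j : Fin n} (hj : j ∉ σ) : x ∉ U j :=
  fun h ↦ hx.2 (Set.mem_biUnion hj h)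

theorem atomOf_union_subset_symmDiff {τ : Set (Fin n)} {i j : Fin n}
    (hiσ : i ∈ σ) (hiτ : i ∉ τ) (hjτ : j ∈ τ) (hjσ : j ∉ σ) :
    atomOf U σ ∪ atomOf U τ ⊆ U i ∆ U j := by
  rintro x (hx | hx) <;> rw [Set.mem_symmDiff]
  · exact Or.inl ⟨mem_of_mem_atomOf hx hiσ, notMem_of_mem_atomOf hx hjσ⟩
  · exact Or.inr ⟨mem_of_mem_atomOf hx hjτ, notMem_of_mem_atomOf hx hiτ⟩

theorem subset_or_subset_of_isPreconnected_subset_atomOf_union [TopologicalSpace X]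
    (hU : (∀ i, IsOpen (U i)) ∨ (∀ i, IsClosed (U i))) {τ : Set (Fin n)} {S : Set X}
    (hS : IsPreconnected S) (hSσ : (S ∩ atomOf U σ).Nonempty) (hSτ : (S ∩ atomOf U τ).Nonempty)
    (hsub : S ⊆ atomOf U σ ∪ atomOf U τ) : σ ⊆ τ ∨ τ ⊆ σ := by
  by_contra! hc
  obtain ⟨i, hiσ, hiτ⟩ := Set.not_subset.mp hc.1
  obtain ⟨j, hjτ, hjσ⟩ := Set.not_subset.mp hc.2
  obtain ⟨p, hpS, hp⟩ := hSσ
  obtain ⟨q, hqS, hq⟩ := hSτ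
  have hUij : (IsOpen (U i) ∧ IsOpen (U j)) ∨ (IsClosed (U i) ∧ IsClosed (U j)) :=
    hU.imp (fun h ↦ ⟨h i, h j⟩) (fun h ↦ ⟨h i, h j⟩)
  rcases hS.subset_or_subset_of_subset_symmDiff hUij
      (hsub.trans (atomOf_union_subset_symmDiff hiσ hiτ hjτ hjσ)) with h | h
  · exact notMem_of_mem_atomOf hq hiτ (h hqS)
  · exact notMem_of_mem_atomOf hp hjσ (h hpS)

end Atoms

theorem stmt0 {X : Type*} [TopologicalSpace X] {n : ℕ} (U : Fin n → Set X)
    (hU : (∀ i, IsOpen (U i)) ∨ (∀ i, IsClosed (U i)))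
    (σ τ : Set (Fin n)) (pσ pτ : X)
    (hpσ : pσ ∈ atomOf U σ) (hpτ : pτ ∈ atomOf U τ)
    (γ : ℝ → X) (hγ : ContinuousOn γ (Set.Icc 0 1))
    (h0 : γ 0 = pσ) (h1 : γ 1 = pτ)
    (hrange : ∀ t ∈ Set.Icc (0:ℝ) 1, γ t ∈ atomOf U σ ∪ atomOf U τ) :
    σ ⊆ τ ∨ τ ⊆ σ := by
  have h0I : (0 : ℝ) ∈ Set.Icc (0 : ℝ) 1 := Set.left_mem_Icc.mpr zero_le_one
  have h1I : (1 : ℝ) ∈ Set.Icc (0 : ℝ) 1 := Set.right_mem_Icc.mpr zero_le_one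
  refine subset_or_subset_of_isPreconnected_subset_atomOf_union hU
    (isPreconnected_Icc.image γ hγ) ⟨pσ, ⟨0, h0I, h0⟩, hpσ⟩ ⟨pτ, ⟨1, h1I, h1⟩, hpτ⟩ ?_
  rintro _ ⟨t, ht, rfl⟩
  exact hrange t ht
end

section
/- Let U_1, …, U_n be convex subsets of ℝ^d that are either all open or all closed, let C = code(U, ℝ^d), and let x ∈ A_σ and y ∈ A_τ for codewords σ, τ ∈ C. Then there exist parameters 0 = t_1 ≤ t_2 ≤ … ≤ t_ℓ = 1 and codewords τ_1 = σ, τ_2, …, τ_ℓ = τ of C such that: (i) (1−t_r)x + t_r y ∈ A_{τ_r} for each r; (ii) every point of the segment from x to y has its codeword among τ_1, …, τ_ℓ; (iii) for each r, τ_r ⊆ τ_{r+1} or τ_{r+1} ⊆ τ_r; and (iv) τ_i ∩ τ_j ⊆ τ_m whenever 1 ≤ i < m < j ≤ ℓ. In other words, the sequence of atoms along the segment from x to y forms a feasible walk in the codeword containment graph G_C. -/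
/-- The combinatorial code of a family of sets: the collection of subsets with
nonempty atom. -/
def codeOf {n : ℕ} {X : Type*} (U : Fin n → Set X) : Set (Set (Fin n)) :=
  {σ | (atomOf U σ).Nonempty}

open Set

def codewordOf {ι X : Type*} (U : ι → Set X) (z : X) : Set ι :=
  {i | z ∈ U i}

theorem mem_atomOf_iff {n : ℕ} {X : Type*} {U : Fin n → Set X} {σ : Set (Fin n)} {z : X} :
    z ∈ atomOf U σ ↔ codewordOf U z = σ := by
  simp only [atomOf, codewordOf, mem_sdiff, mem_iInter₂, mem_iUnion₂, mem_compl_iff,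
    not_exists, Set.ext_iff, mem_ofPred_eq]
  exact ⟨fun h i => ⟨fun hi => by_contra fun hσ => h.2 i hσ hi, h.1 i⟩,
    fun h => ⟨fun i hi => (h i).2 hi, fun i hσ hi => hσ ((h i).1 hi)⟩⟩

section Order

variable {α : Type*} [LinearOrder α]

theorem Set.OrdConnected.finite_frontier [TopologicalSpace α] [OrderClosedTopology α]
    {s : Set α} (hs : s.OrdConnected) : (frontier s).Finite := by
  refine finite_of_forall_not_lt_lt fun u hu v hv w hw huv hvw => hv.2 ?_
  obtain ⟨u', hu'v, hu's⟩ := mem_closure_iff.1 hu.1 (Iio v) isOpen_Iio huv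
  obtain ⟨w', hvw', hw's⟩ := mem_closure_iff.1 hw.1 (Ioi v) isOpen_Ioi hvw
  exact interior_maximal (Ioo_subset_Icc_self.trans (hs.out hu's hw's)) isOpen_Ioo ⟨hu'v, hvw'⟩

theorem Monotone.exists_eq_or_mem_Ioo {e : ℕ → α} (he : Monotone e) {s : α} :
    ∀ N, s ∈ Icc (e 0) (e N) → (∃ j ≤ N, e j = s) ∨ ∃ j < N, s ∈ Ioo (e j) (e (j + 1))
  | 0, hs => .inl ⟨0, le_rfl, (le_antisymm hs.2 hs.1).symm⟩
  | N + 1, hs => by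
    rcases le_or_gt s (e N) with hsN | hsN
    · rcases he.exists_eq_or_mem_Ioo N ⟨hs.1, hsN⟩ with ⟨j, hj, hjs⟩ | ⟨j, hj, hjs⟩
      · exact .inl ⟨j, by omega, hjs⟩
      · exact .inr ⟨j, by omega, hjs⟩
    · rcases hs.2.eq_or_lt with hs' | hs'
      · exact .inl ⟨N + 1, le_rfl, hs'.symm⟩
      · exact .inr ⟨N, N.lt_succ_self, hsN, hs'⟩

theorem Set.Finite.exists_monotone_range_eq {S : Set α} (hS : S.Finite) (hne : S.Nonempty) :
    ∃ (N : ℕ) (e : ℕ → α), Monotone e ∧ range e = S ∧ (∀ j < N, e j < e (j + 1)) ∧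
      ∀ j, e j ≤ e N := by
  classical
  set k := hS.toFinset.card
  have hk : 0 < k := Finset.card_pos.2 (hS.toFinset_nonempty.2 hne)
  set f := hS.toFinset.orderEmbOfFin rfl
  refine ⟨k - 1, fun j => f ⟨min j (k - 1), by omega⟩, fun i j hij => ?_, ?_, fun j hj => ?_,
    fun j => ?_⟩
  · exact f.monotone (Fin.mk_le_mk.2 (min_le_min_right _ hij))
  · refine (range_subset_iff.2 fun j => ?_).antisymm fun z hz => ?_
    · exact hS.mem_toFinset.1 (hS.toFinset.orderEmbOfFin_mem rfl _)
    · rw [← hS.coe_toFinset, ← hS.toFinset.range_orderEmbOfFin rfl] at hz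
      obtain ⟨⟨j, hj⟩, rfl⟩ := hz
      exact ⟨j, congrArg f (Fin.ext (min_eq_left (by omega)))⟩
  · exact f.strictMono (Fin.mk_lt_mk.2 (by omega))
  · exact f.monotone (Fin.mk_le_mk.2 (by omega))

theorem exists_monotone_partition_disjoint {F : Set α} (hF : F.Finite) {a b : α} (hab : a ≤ b) :
    ∃ (N : ℕ) (e : ℕ → α), Monotone e ∧ e 0 = a ∧ e N = b ∧ (∀ j < N, e j < e (j + 1)) ∧
      ∀ j < N, Disjoint (Ioo (e j) (e (j + 1))) F := by
  set S := insert a (insert b (Icc a b ∩ F))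
  have hS : S.Finite := ((hF.inter_of_right _).insert b).insert a
  have hSab : S ⊆ Icc a b :=
    insert_subset ⟨le_rfl, hab⟩ (insert_subset ⟨hab, le_rfl⟩ inter_subset_left)
  obtain ⟨N, e, he, hrange, hlt, hmax⟩ :=
    hS.exists_monotone_range_eq (insert_nonempty _ _)
  have heS : ∀ j, e j ∈ S := fun j => hrange ▸ mem_range_self j
  obtain ⟨ja, hja⟩ : a ∈ range e := hrange ▸ mem_insert _ _
  obtain ⟨jb, hjb⟩ : b ∈ range e := hrange ▸ mem_insert_of_mem _ (mem_insert _ _)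
  refine ⟨N, e, he, le_antisymm (hja ▸ he (Nat.zero_le ja)) (hSab (heS 0)).1,
    le_antisymm (hSab (heS N)).2 (hjb ▸ hmax jb), hlt, fun j _ => ?_⟩
  refine disjoint_left.2 fun z hz hzF => ?_
  have hzS : z ∈ S := mem_insert_of_mem _ (mem_insert_of_mem _
    ⟨⟨(hSab (heS j)).1.trans hz.1.le, hz.2.le.trans (hSab (heS (j + 1))).2⟩, hzF⟩)
  obtain ⟨m, rfl⟩ := hrange.symm ▸ hzS
  exact he.ne_of_lt_of_lt_nat j hz.1 hz.2 m rfl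

end Order

section Topology

variable {X ι : Type*} [TopologicalSpace X] {T : ι → Set X} {G : Set X}

theorem IsPreconnected.subset_of_disjoint_frontier {t : Set X} (hG : IsPreconnected G)
    (hGt : Disjoint G (frontier t)) (hne : (G ∩ t).Nonempty) : G ⊆ t := by
  have hcover : G ⊆ interior t ∪ (closure t)ᶜ := fun z hz =>
    (em (z ∈ interior t)).imp id fun hzi hzc => hGt.notMem_of_mem_left hz ⟨hzc, hzi⟩
  rcases hG.subset_or_subset isOpen_interior isClosed_closure.isOpen_compl
    (disjoint_compl_right.mono_left interior_subset_closure) hcover with h | h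
  · exact h.trans interior_subset
  · obtain ⟨z, hzG, hzt⟩ := hne
    exact absurd (subset_closure hzt) (h hzG)

theorem codewordOf_eq_of_disjoint_frontier (hG : IsPreconnected G)
    (hGT : ∀ i, Disjoint G (frontier (T i))) {z w : X} (hz : z ∈ G) (hw : w ∈ G) :
    codewordOf T z = codewordOf T w := by
  ext i
  exact ⟨fun hi => hG.subset_of_disjoint_frontier (hGT i) ⟨z, hz, hi⟩ hw,
    fun hi => hG.subset_of_disjoint_frontier (hGT i) ⟨w, hw, hi⟩ hz⟩

theorem codewordOf_nested_of_mem_closure (hoc : (∀ i, IsOpen (T i)) ∨ ∀ i, IsClosed (T i))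
    (hG : IsPreconnected G) (hGT : ∀ i, Disjoint G (frontier (T i))) {z w : X}
    (hz : z ∈ closure G) (hw : w ∈ G) :
    codewordOf T z ⊆ codewordOf T w ∨ codewordOf T w ⊆ codewordOf T z := by
  rcases hoc with hopen | hclosed
  · refine .inl fun i hi => hG.subset_of_disjoint_frontier (hGT i) ?_ hw
    exact (mem_closure_iff.1 hz (T i) (hopen i) hi).mono (inter_comm _ _).subset
  · exact .inr fun i hi => (hclosed i).closure_subset_iff.2
      (hG.subset_of_disjoint_frontier (hGT i) ⟨w, hw, hi⟩) hz

end Topology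

theorem codewordOf_inter_subset_of_ordConnected {ι α : Type*} [Preorder α] {T : ι → Set α}
    (hT : ∀ i, (T i).OrdConnected) {a b c : α} (hab : a ≤ b) (hbc : b ≤ c) :
    codewordOf T a ∩ codewordOf T c ⊆ codewordOf T b :=
  fun i hi => (hT i).out hi.1 hi.2 ⟨hab, hbc⟩

theorem exists_codewordOf_walk {ι : Type*} [Finite ι] {T : ι → Set ℝ}
    (hT : ∀ i, (T i).OrdConnected) (hoc : (∀ i, IsOpen (T i)) ∨ ∀ i, IsClosed (T i))
    {a b : ℝ} (hab : a ≤ b) :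
    ∃ (N : ℕ) (t : ℕ → ℝ), Monotone t ∧ t 0 = a ∧ t (2 * N) = b ∧
      (∀ s ∈ Icc a b, ∃ r ≤ 2 * N, codewordOf T s = codewordOf T (t r)) ∧
      ∀ r < 2 * N, codewordOf T (t r) ⊆ codewordOf T (t (r + 1)) ∨
        codewordOf T (t (r + 1)) ⊆ codewordOf T (t r) := by
  obtain ⟨N, e, he, he0, heN, hlt, hgap⟩ :=
    exists_monotone_partition_disjoint (finite_iUnion fun i => (hT i).finite_frontier) hab
  have hdisj : ∀ j < N, ∀ i, Disjoint (Ioo (e j) (e (j + 1))) (frontier (T i)) :=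
    fun j hj i => (hgap j hj).mono_right (subset_iUnion (fun i => frontier (T i)) i)
  have hmid : ∀ j < N, (e j + e (j + 1)) / 2 ∈ Ioo (e j) (e (j + 1)) := fun j hj =>
    ⟨by linarith [hlt j hj], by linarith [hlt j hj]⟩
  -- even indices visit the breakpoints, odd ones the midpoints of the gaps between them
  set t : ℕ → ℝ := fun r => (e (r / 2) + e ((r + 1) / 2)) / 2
  have ht_even : ∀ j, t (2 * j) = e j := fun j => by
    simp only [t, show 2 * j / 2 = j by omega, show (2 * j + 1) / 2 = j by omega]; ring
  have ht_odd : ∀ j, t (2 * j + 1) = (e j + e (j + 1)) / 2 := fun j => by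
    simp only [t, show (2 * j + 1) / 2 = j by omega, show (2 * j + 1 + 1) / 2 = j + 1 by omega]
  have hnested : ∀ j < N, ∀ z ∈ Icc (e j) (e (j + 1)),
      codewordOf T z ⊆ codewordOf T (t (2 * j + 1)) ∨
        codewordOf T (t (2 * j + 1)) ⊆ codewordOf T z := fun j hj z hz => by
    rw [ht_odd]
    refine codewordOf_nested_of_mem_closure hoc isPreconnected_Ioo (hdisj j hj) ?_ (hmid j hj)
    rwa [closure_Ioo (hlt j hj).ne]
  refine ⟨N, t, fun r r' h => ?_, by simpa [he0] using ht_even 0, by rw [ht_even, heN], ?_, ?_⟩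
  · exact div_le_div_of_nonneg_right
      (add_le_add (he (Nat.div_le_div_right h)) (he (Nat.div_le_div_right (by omega)))) two_pos.le
  · intro s hs
    rcases he.exists_eq_or_mem_Ioo N (he0 ▸ heN ▸ hs) with ⟨j, hj, rfl⟩ | ⟨j, hj, hsj⟩
    · exact ⟨2 * j, by omega, by rw [ht_even]⟩
    · refine ⟨2 * j + 1, by omega, ?_⟩
      rw [ht_odd]
      exact codewordOf_eq_of_disjoint_frontier isPreconnected_Ioo (hdisj j hj) hsj (hmid j hj)
  · intro r hr
    obtain ⟨j, rfl | rfl⟩ := Nat.even_or_odd' r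
    · simpa only [ht_even] using hnested j (by omega) (e j) ⟨le_rfl, (hlt j (by omega)).le⟩
    · rw [show 2 * j + 1 + 1 = 2 * (j + 1) by omega, ht_even]
      exact (hnested j (by omega) (e (j + 1)) ⟨(hlt j (by omega)).le, le_rfl⟩).symm

/-- The sequence of atoms along a straight-line segment between points of two atoms of a
convex (open or closed) realization forms a feasible walk in the codeword containment
graph `G_C`. -/
theorem stmt1 {n d : ℕ} (U : Fin n → Set (EuclideanSpace ℝ (Fin d)))
    (hconv : ∀ i, Convex ℝ (U i))
    (hoc : (∀ i, IsOpen (U i)) ∨ (∀ i, IsClosed (U i)))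
    (σ τ : Set (Fin n)) (x y : EuclideanSpace ℝ (Fin d))
    (hx : x ∈ atomOf U σ) (hy : y ∈ atomOf U τ) :
    ∃ (ℓ : ℕ) (t : ℕ → ℝ) (c : ℕ → Set (Fin n)),
      1 ≤ ℓ ∧ t 0 = 0 ∧ t (ℓ - 1) = 1 ∧
      (∀ r, r + 1 < ℓ → t r ≤ t (r + 1)) ∧
      c 0 = σ ∧ c (ℓ - 1) = τ ∧
      (∀ r < ℓ, c r ∈ codeOf U) ∧
      -- (i): the point at parameter `t r` lies in the atom of `c r`
      (∀ r < ℓ, (1 - t r) • x + t r • y ∈ atomOf U (c r)) ∧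
      -- (ii): every point of the segment has its codeword among `c 0, …, c (ℓ-1)`
      (∀ s ∈ Set.Icc (0:ℝ) 1, ∃ r < ℓ, (1 - s) • x + s • y ∈ atomOf U (c r)) ∧
      -- (iii): consecutive codewords are nested, i.e. the sequence is a walk in `G_C`
      (∀ r, r + 1 < ℓ → c r ⊆ c (r + 1) ∨ c (r + 1) ⊆ c r) ∧
      -- (iv): feasibility
      (∀ i m j, i < m → m < j → j < ℓ → c i ∩ c j ⊆ c m) := by
  set p := AffineMap.lineMap (k := ℝ) x y
  have hp : ∀ s : ℝ, (1 - s) • x + s • y = p s :=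
    fun s => (AffineMap.lineMap_apply_module x y s).symm
  have hT : ∀ i, (p ⁻¹' U i).OrdConnected := fun i => ((hconv i).affine_preimage p).ordConnected
  have hocT : (∀ i, IsOpen (p ⁻¹' U i)) ∨ ∀ i, IsClosed (p ⁻¹' U i) :=
    hoc.imp (fun h i => (h i).preimage AffineMap.lineMap_continuous)
      (fun h i => (h i).preimage AffineMap.lineMap_continuous)
  obtain ⟨N, t, ht, ht0, htN, hcover, hnested⟩ := exists_codewordOf_walk hT hocT zero_le_one
  refine ⟨2 * N + 1, t, fun r => codewordOf U (p (t r)), by omega, ht0, htN,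
    fun r _ => ht r.le_succ, ?_, ?_, fun r _ => ⟨_, mem_atomOf_iff.2 rfl⟩, fun r _ => ?_, fun s hs => ?_, fun r hr => ?_,
    fun i m j him hmj _ => codewordOf_inter_subset_of_ordConnected hT (ht him.le) (ht hmj.le)⟩
  · simpa [ht0, p] using mem_atomOf_iff.1 hx
  · simpa [htN, p] using mem_atomOf_iff.1 hy
  · rw [hp]; exact mem_atomOf_iff.2 rfl
  · obtain ⟨r, hr, hsr⟩ := hcover s hs
    exact ⟨r, by omega, by rw [hp]; exact mem_atomOf_iff.2 hsr⟩
  · exact hnested r (by omega)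
end

section
/- The combinatorial neural code D_1 = {{1,2,3}, {2,3,4}, {3,4,5}, {1,4,5}, {1,2,5}, {1,2}, {2,3}, {3,4}, {4,5}, {1,5}, ∅} on 5 neurons has no closed convex realization: for every d ≥ 1 there do not exist closed convex sets U_1, …, U_5 ⊆ ℝ^d with code(U, ℝ^d) = D_1. -/
/-- The code `D₁ = {123, 234, 345, 145, 125, 12, 23, 34, 45, 15, ∅}` on five neurons,
written with neurons `1,…,5` encoded as `0,…,4 : Fin 5`. -/
def D1 : Set (Set (Fin 5)) :=
  {{0, 1, 2}, {1, 2, 3}, {2, 3, 4}, {0, 3, 4}, {0, 1, 4},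
   {0, 1}, {1, 2}, {2, 3}, {3, 4}, {0, 4}, ∅}

/-!
Write `T i = U (i - 1) ∩ U (i + 1)` (`neighbourInter`), indices mod 5. In a closed convex
realization of `D₁`, `T i ⊆ U i ⊆ U (i - 1) ∪ U (i + 1)` and consecutive `T i` are disjoint.
Pick `x i ∈ T i` minimizing the perimeter of the closed polygon `x 0, …, x 4` (inside the convex
hull of some initial choice, for compactness). The segment `[x (i - 1), x (i + 1)]` lies in `U i`,
hence in the union of the closed sets `U (i - 1)` and `U (i + 1)`, which contain its two ends;
being connected it meets `T i`, so by minimality and strict convexity of the norm `x i` lies on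
that segment. Thus every vertex of the polygon lies strictly between its two neighbours, which is
impossible for a vertex that is an extreme point of the vertex set.
-/

open Set Function

section Code

variable {n : ℕ} {X : Type*} {U : Fin n → Set X}

theorem setOf_mem_mem_codeOf (U : Fin n → Set X) (p : X) : {i | p ∈ U i} ∈ codeOf U :=
  ⟨p, mem_iInter₂.2 fun _ hi ↦ hi, fun hp ↦ by
    obtain ⟨j, hj, hpj⟩ := mem_iUnion₂.1 hp
    exact hj hpj⟩

theorem exists_forall_mem_of_mem_codeOf {σ : Set (Fin n)} (h : σ ∈ codeOf U) :
    ∃ p, ∀ i ∈ σ, p ∈ U i :=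
  let ⟨p, hp, _⟩ := h
  ⟨p, mem_iInter₂.1 hp⟩

def neighbourInter [NeZero n] (U : Fin n → Set X) (i : Fin n) : Set X :=
  U (i - 1) ∩ U (i + 1)

end Code

namespace D1

theorem sub_one_mem_or_add_one_mem :
    ∀ σ ∈ D1, ∀ i : Fin 5, i ∈ σ → i - 1 ∈ σ ∨ i + 1 ∈ σ := by
  intro σ hσ
  simp only [D1, mem_insert_iff, mem_singleton_iff] at hσ
  rcases hσ with rfl | rfl | rfl | rfl | rfl | rfl | rfl | rfl | rfl | rfl | rfl <;> decide

theorem mem_of_sub_one_mem_of_add_one_mem :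
    ∀ σ ∈ D1, ∀ i : Fin 5, i - 1 ∈ σ → i + 1 ∈ σ → i ∈ σ := by
  intro σ hσ
  simp only [D1, mem_insert_iff, mem_singleton_iff] at hσ
  rcases hσ with rfl | rfl | rfl | rfl | rfl | rfl | rfl | rfl | rfl | rfl | rfl <;> decide

theorem add_one_add_one_notMem_of_sub_one_mem_of_add_one_mem :
    ∀ σ ∈ D1, ∀ i : Fin 5, i - 1 ∈ σ → i + 1 ∈ σ → i + 1 + 1 ∉ σ := by
  intro σ hσ
  simp only [D1, mem_insert_iff, mem_singleton_iff] at hσ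
  rcases hσ with rfl | rfl | rfl | rfl | rfl | rfl | rfl | rfl | rfl | rfl | rfl <;> decide

theorem exists_sub_one_mem_add_one_mem (i : Fin 5) : ∃ σ ∈ D1, i - 1 ∈ σ ∧ i + 1 ∈ σ := by
  fin_cases i <;> simp +decide [D1]

end D1

section Realization

variable {X : Type*} {U : Fin 5 → Set X}

theorem setOf_mem_mem_D1 (hU : codeOf U = D1) (p : X) : {i | p ∈ U i} ∈ D1 :=
  hU ▸ setOf_mem_mem_codeOf U p

theorem subset_union_of_codeOf_eq_D1 (hU : codeOf U = D1) (i : Fin 5) :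
    U i ⊆ U (i - 1) ∪ U (i + 1) := fun p hp ↦
  D1.sub_one_mem_or_add_one_mem _ (setOf_mem_mem_D1 hU p) i hp

theorem neighbourInter_subset_of_codeOf_eq_D1 (hU : codeOf U = D1) (i : Fin 5) :
    neighbourInter U i ⊆ U i := fun p hp ↦
  D1.mem_of_sub_one_mem_of_add_one_mem _ (setOf_mem_mem_D1 hU p) i hp.1 hp.2

theorem disjoint_neighbourInter_of_codeOf_eq_D1 (hU : codeOf U = D1) (i : Fin 5) :
    Disjoint (neighbourInter U i) (neighbourInter U (i + 1)) :=
  disjoint_left.2 fun p hp hp' ↦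
    D1.add_one_add_one_notMem_of_sub_one_mem_of_add_one_mem _ (setOf_mem_mem_D1 hU p) i
      hp.1 hp.2 hp'.2

theorem neighbourInter_nonempty_of_codeOf_eq_D1 (hU : codeOf U = D1) (i : Fin 5) :
    (neighbourInter U i).Nonempty := by
  obtain ⟨σ, hσ, hi₁, hi₂⟩ := D1.exists_sub_one_mem_add_one_mem i
  obtain ⟨p, hp⟩ := exists_forall_mem_of_mem_codeOf (hU ▸ hσ : σ ∈ codeOf U)
  exact ⟨p, hp _ hi₁, hp _ hi₂⟩

end Realization

section Perimeter

variable {n : ℕ} [NeZero n] {P : Type*} [PseudoMetricSpace P]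

def cyclePerimeter (x : Fin n → P) : ℝ :=
  ∑ i, dist (x i) (x (i + 1))

theorem cyclePerimeter_eq_add_sum_compl (x : Fin n → P) {i : Fin n} (hi : i - 1 ≠ i) :
    cyclePerimeter x = dist (x (i - 1)) (x i) + dist (x i) (x (i + 1)) +
      ∑ k ∈ {i - 1, i}ᶜ, dist (x k) (x (k + 1)) := by
  rw [cyclePerimeter, ← Finset.sum_add_sum_compl {i - 1, i}, Finset.sum_pair hi, sub_add_cancel]

theorem cyclePerimeter_update_add (x : Fin n → P) {i : Fin n} (hi : i - 1 ≠ i) (z : P) :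
    cyclePerimeter (update x i z) + (dist (x (i - 1)) (x i) + dist (x i) (x (i + 1))) =
      cyclePerimeter x + (dist (x (i - 1)) z + dist z (x (i + 1))) := by
  have hi' : i + 1 ≠ i := fun h ↦ hi (by rw [sub_eq_iff_eq_add, h])
  have hrest : ∀ k ∈ ({i - 1, i}ᶜ : Finset (Fin n)),
      dist (update x i z k) (update x i z (k + 1)) = dist (x k) (x (k + 1)) := by
    intro k hk
    simp only [Finset.mem_compl, Finset.mem_insert, Finset.mem_singleton, not_or] at hk
    rw [update_of_ne hk.2, update_of_ne fun h ↦ hk.1 (eq_sub_of_add_eq h)]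
  rw [cyclePerimeter_eq_add_sum_compl _ hi, cyclePerimeter_eq_add_sum_compl _ hi,
    Finset.sum_congr rfl hrest, update_self, update_of_ne hi, update_of_ne hi']
  ring

theorem exists_isMinOn_cyclePerimeter {T : Fin n → Set P} (hT : ∀ i, IsCompact (T i))
    (hne : ∀ i, (T i).Nonempty) : ∃ x ∈ univ.pi T, IsMinOn cyclePerimeter (univ.pi T) x :=
  (isCompact_univ_pi hT).exists_isMinOn (univ_pi_nonempty_iff.2 hne)
    (by unfold cyclePerimeter; fun_prop)

end Perimeter

section Geometry

variable {E : Type*} [NormedAddCommGroup E] [NormedSpace ℝ E]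

theorem exists_sub_one_eq_of_forall_mem_openSegment {n : ℕ} [NeZero n] (x : Fin n → E)
    (hx : ∀ i, x i ∈ openSegment ℝ (x (i - 1)) (x (i + 1))) : ∃ i, x (i - 1) = x i := by
  obtain ⟨_, hext⟩ := (finite_range x).isCompact.extremePoints_nonempty (range_nonempty x)
  obtain ⟨⟨i, rfl⟩, hext⟩ := mem_extremePoints.1 hext
  exact ⟨i, (hext _ (mem_range_self _) _ (mem_range_self _) (hx i)).1⟩

variable [StrictConvexSpace ℝ E] {n : ℕ} [NeZero n] {U : Fin n → Set E}

theorem mem_segment_of_isMinOn_cyclePerimeter (hclosed : ∀ i, IsClosed (U i))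
    (hconv : ∀ i, Convex ℝ (U i)) (hsub : ∀ i, U i ⊆ U (i - 1) ∪ U (i + 1))
    (hinter : ∀ i, neighbourInter U i ⊆ U i) {K : Set E} (hK : Convex ℝ K) {x : Fin n → E}
    (hx : x ∈ univ.pi fun i ↦ neighbourInter U i ∩ K)
    (hmin : IsMinOn cyclePerimeter (univ.pi fun i ↦ neighbourInter U i ∩ K) x)
    {i : Fin n} (hi : i - 1 ≠ i) : x i ∈ segment ℝ (x (i - 1)) (x (i + 1)) := by
  have hxT (j : Fin n) : x j ∈ neighbourInter U j ∩ K := hx j (mem_univ j)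
  have hl : x (i - 1) ∈ U (i - 1) := hinter _ (hxT _).1
  have hr : x (i + 1) ∈ U (i + 1) := hinter _ (hxT _).1
  have hl' : x (i - 1) ∈ U i := by simpa using (hxT (i - 1)).1.2
  have hr' : x (i + 1) ∈ U i := by simpa using (hxT (i + 1)).1.1
  obtain ⟨z, hz, hzT⟩ := isPreconnected_closed_iff.1 (convex_segment _ _).isPreconnected
    _ _ (hclosed _) (hclosed _) (((hconv i).segment_subset hl' hr').trans (hsub i))
    ⟨_, left_mem_segment ℝ _ _, hl⟩ ⟨_, right_mem_segment ℝ _ _, hr⟩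
  have hzK : z ∈ K := hK.segment_subset (hxT _).2 (hxT _).2 hz
  have hle : cyclePerimeter x ≤ cyclePerimeter (update x i z) :=
    hmin ((update_mem_pi_iff_of_mem hx).2 fun _ ↦ ⟨hzT, hzK⟩)
  have hupdate := cyclePerimeter_update_add x hi z
  have hz_dist := dist_add_dist_of_mem_segment hz
  exact mem_segment_iff_wbtw.2 <| dist_add_dist_eq_iff.1 <|
    le_antisymm (by linarith) (dist_triangle _ _ _)

theorem false_of_closed_convex_cycle (hclosed : ∀ i, IsClosed (U i))
    (hconv : ∀ i, Convex ℝ (U i)) (hsub : ∀ i, U i ⊆ U (i - 1) ∪ U (i + 1))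
    (hinter : ∀ i, neighbourInter U i ⊆ U i)
    (hdisj : ∀ i, Disjoint (neighbourInter U i) (neighbourInter U (i + 1)))
    (hne : ∀ i, (neighbourInter U i).Nonempty) : False := by
  have hne_sub_one : ∀ i : Fin n, i - 1 ≠ i := fun i h ↦ by
    have := hdisj (i - 1)
    rw [sub_add_cancel, h, disjoint_self, bot_eq_empty] at this
    exact (hne i).ne_empty this
  choose p hp using hne
  set K := convexHull ℝ (range p)
  obtain ⟨x, hx, hmin⟩ := exists_isMinOn_cyclePerimeter
    (T := fun i ↦ neighbourInter U i ∩ K)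
    (fun i ↦ ((finite_range p).isCompact_convexHull ℝ).inter_left
      ((hclosed _).inter (hclosed _)))
    (fun i ↦ ⟨p i, hp i, subset_convexHull ℝ _ (mem_range_self i)⟩)
  have hx_ne (i : Fin n) : x (i - 1) ≠ x i := fun h ↦
    disjoint_left.1 (hdisj (i - 1)) (hx _ (mem_univ _)).1
      (by rw [sub_add_cancel, h]; exact (hx i (mem_univ i)).1)
  obtain ⟨i, hi⟩ := exists_sub_one_eq_of_forall_mem_openSegment x fun i ↦
    mem_openSegment_of_ne_left_right (hx_ne i) (by simpa using (hx_ne (i + 1)).symm)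
      (mem_segment_of_isMinOn_cyclePerimeter hclosed hconv hsub hinter (convex_convexHull ℝ _)
        hx hmin (hne_sub_one i))
  exact hx_ne i hi

end Geometry

/-- The code `D₁` has no closed convex realization in any dimension `d ≥ 1`. -/
theorem stmt4 : ∀ d : ℕ, 1 ≤ d →
    ¬ ∃ U : Fin 5 → Set (EuclideanSpace ℝ (Fin d)),
        (∀ i, Convex ℝ (U i)) ∧ (∀ i, IsClosed (U i)) ∧ codeOf U = D1 := by
  rintro d - ⟨U, hconv, hclosed, hU⟩
  exact false_of_closed_convex_cycle hclosed hconv (subset_union_of_codeOf_eq_D1 hU)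
    (neighbourInter_subset_of_codeOf_eq_D1 hU) (disjoint_neighbourInter_of_codeOf_eq_D1 hU)
    (neighbourInter_nonempty_of_codeOf_eq_D1 hU)
end

section
/- For n ≥ 1, suppose U_1, …, U_{n+6} are convex open subsets of ℝ^d realizing the code L_n, i.e. code(U, ℝ^d) = L_n. Define V_k = U_k for 1 ≤ k ≤ n+4 and V_{n+5} = U_{n+5} ∪ U_{n+6}. Then V_{n+5} is convex, and V_1, …, V_{n+5} is a convex open realization of L_{n−1}: code(V, ℝ^d) = L_{n−1}. Consequently, if L_n has an open convex realization in some ℝ^d, then so does L_{n−1}. -/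
/-- The combinatorial code of a family of sets `U` indexed by the neurons `1, …, m`
(natural-number labels): the collection of codewords `{i ∈ [1, m] : p ∈ U i}` of
points `p`. -/
def codeOn {X : Type*} (m : ℕ) (U : ℕ → Set X) : Set (Set ℕ) :=
  {σ | ∃ p : X, {i | i ∈ Set.Icc 1 m ∧ p ∈ U i} = σ}

/-- The code `L n` on the `n + 6` neurons `{1, …, n+6}`: its codewords are
`∅, {1}, {2}, {3}, {1,2,3}, {1,4,5}, {4,5}, {2,4,5,6}`, the sets `{4,k}` for
`6 ≤ k ≤ n+6`, the sets `{4,k,k+1}` for `6 ≤ k ≤ n+5`, and `{3,4,n+6}`. -/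
def Lcode (n : ℕ) : Set (Set ℕ) :=
  ({∅, {1}, {2}, {3}, {1, 2, 3}, {1, 4, 5}, {4, 5}, {2, 4, 5, 6},
    {3, 4, n + 6}} : Set (Set ℕ)) ∪
  {s | ∃ k, 6 ≤ k ∧ k ≤ n + 6 ∧ s = {4, k}} ∪
  {s | ∃ k, 6 ≤ k ∧ k ≤ n + 5 ∧ s = ({4, k, k + 1} : Set ℕ)}

lemma lmem {n : ℕ} {σ : Set ℕ} (h : σ ∈ Lcode n) :
    σ = ∅ ∨ σ = {1} ∨ σ = {2} ∨ σ = {3} ∨ σ = {1,2,3} ∨ σ = {1,4,5} ∨ σ = {4,5} ∨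
    σ = {2,4,5,6} ∨ σ = {3,4,n+6} ∨ (∃ k, 6 ≤ k ∧ k ≤ n + 6 ∧ σ = {4,k}) ∨
    (∃ k, 6 ≤ k ∧ k ≤ n + 5 ∧ σ = {4,k,k+1}) := by
  simp only [Lcode, Set.mem_union, Set.mem_insert_iff, Set.mem_singleton_iff,
    Set.mem_setOf_eq] at h
  rcases h with ((h|h|h|h|h|h|h|h|h)|h)|h
  · tauto
  · tauto
  · tauto
  · tauto
  · tauto
  · tauto
  · tauto
  · tauto
  · tauto
  · exact Or.inr (Or.inr (Or.inr (Or.inr (Or.inr (Or.inr (Or.inr (Or.inr (Or.inr (Or.inl h)))))))))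
  · exact Or.inr (Or.inr (Or.inr (Or.inr (Or.inr (Or.inr (Or.inr (Or.inr (Or.inr (Or.inr h)))))))))

lemma lmem' {n : ℕ} {σ : Set ℕ}
    (h : σ = ∅ ∨ σ = {1} ∨ σ = {2} ∨ σ = {3} ∨ σ = {1,2,3} ∨ σ = {1,4,5} ∨ σ = {4,5} ∨
    σ = {2,4,5,6} ∨ σ = {3,4,n+6} ∨ (∃ k, 6 ≤ k ∧ k ≤ n + 6 ∧ σ = {4,k}) ∨
    (∃ k, 6 ≤ k ∧ k ≤ n + 5 ∧ σ = {4,k,k+1})) : σ ∈ Lcode n := by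
  simp only [Lcode, Set.mem_union, Set.mem_insert_iff, Set.mem_singleton_iff,
    Set.mem_setOf_eq]
  rcases h with h|h|h|h|h|h|h|h|h|h|h
  · tauto
  · tauto
  · tauto
  · tauto
  · tauto
  · tauto
  · tauto
  · tauto
  · tauto
  · exact Or.inl (Or.inr h)
  · exact Or.inr h

set_option maxHeartbeats 1000000 in
lemma lmem4 {n : ℕ} (hn : 1 ≤ n) {σ : Set ℕ} (h : σ ∈ Lcode n)
    (h5 : n + 5 ∈ σ ∨ n + 6 ∈ σ) : 4 ∈ σ := by
  rcases lmem h with rfl|rfl|rfl|rfl|rfl|rfl|rfl|rfl|rfl|⟨k,h1,h2,rfl⟩|⟨k,h1,h2,rfl⟩ <;>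
    simp only [Set.mem_insert_iff, Set.mem_singleton_iff, Set.mem_empty_iff_false,
      or_self, or_false, false_or] at h5 ⊢ <;>
    first | trivial | omega | tauto

set_option maxHeartbeats 1000000 in
lemma lmem6 {n : ℕ} (hn : 1 ≤ n) {σ : Set ℕ} (h : σ ∈ Lcode n)
    (h6 : n + 6 ∈ σ) {j : ℕ} (hj : j ∈ σ) : j = 3 ∨ j = 4 ∨ j = n + 5 ∨ j = n + 6 := by
  rcases lmem h with rfl|rfl|rfl|rfl|rfl|rfl|rfl|rfl|rfl|⟨k,h1,h2,rfl⟩|⟨k,h1,h2,rfl⟩ <;>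
    simp only [Set.mem_insert_iff, Set.mem_singleton_iff, Set.mem_empty_iff_false,
      or_self, or_false, false_or] at h6 hj <;>
    first | trivial | omega | tauto

set_option maxHeartbeats 1000000 in
lemma lmem34 {n : ℕ} (hn : 1 ≤ n) {σ : Set ℕ} (h : σ ∈ Lcode n)
    (h4 : 4 ∈ σ) (hsub : ∀ j ∈ σ, j = 3 ∨ j = 4) : False := by
  rcases lmem h with rfl|rfl|rfl|rfl|rfl|rfl|rfl|rfl|rfl|⟨k,h1,h2,rfl⟩|⟨k,h1,h2,rfl⟩
  · simp at h4
  · simp at h4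
  · simp at h4
  · simp at h4
  · simp only [Set.mem_insert_iff, Set.mem_singleton_iff] at h4; omega
  · have := hsub 5 (by simp); omega
  · have := hsub 5 (by simp); omega
  · have := hsub 5 (by simp); omega
  · have := hsub (n+6) (by simp); omega
  · have := hsub k (by simp); omega
  · have := hsub k (by simp); omega

lemma cw_mem {X : Type*} {n : ℕ} {U : ℕ → Set X} (hcode : codeOn (n+6) U = Lcode n)
    (p : X) : {i | i ∈ Set.Icc 1 (n+6) ∧ p ∈ U i} ∈ Lcode n := hcode ▸ ⟨p, rfl⟩

lemma seg_subset {d n : ℕ} (hn : 1 ≤ n) (U : ℕ → Set (EuclideanSpace ℝ (Fin d)))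
    (hconv : ∀ i ∈ Set.Icc 1 (n+6), Convex ℝ (U i))
    (hopen : ∀ i ∈ Set.Icc 1 (n+6), IsOpen (U i))
    (hcode : codeOn (n+6) U = Lcode n)
    {p q : EuclideanSpace ℝ (Fin d)} (hp : p ∈ U (n+5)) (hq : q ∈ U (n+6)) :
    segment ℝ p q ⊆ U (n+5) ∪ U (n+6) := by
  have h5Icc : n + 5 ∈ Set.Icc 1 (n+6) := Set.mem_Icc.mpr ⟨by omega, by omega⟩
  have h6Icc : n + 6 ∈ Set.Icc 1 (n+6) := Set.mem_Icc.mpr ⟨by omega, by omega⟩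
  have h4Icc : (4:ℕ) ∈ Set.Icc 1 (n+6) := Set.mem_Icc.mpr ⟨by omega, by omega⟩
  have hp4 : p ∈ U 4 := (lmem4 hn (cw_mem hcode p) (Or.inl ⟨h5Icc, hp⟩)).2
  have hq4 : q ∈ U 4 := (lmem4 hn (cw_mem hcode q) (Or.inr ⟨h6Icc, hq⟩)).2
  set γ : ℝ → EuclideanSpace ℝ (Fin d) := ⇑(AffineMap.lineMap p q : ℝ →ᵃ[ℝ] EuclideanSpace ℝ (Fin d)) with hγ
  have hγc : Continuous γ := AffineMap.lineMap_continuous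
  have hγ0 : γ 0 = p := AffineMap.lineMap_apply_zero p q
  have hγ1 : γ 1 = q := AffineMap.lineMap_apply_one p q
  have hS5conv : Convex ℝ (γ ⁻¹' U (n+5)) := (hconv _ h5Icc).affine_preimage _
  have hS6conv : Convex ℝ (γ ⁻¹' U (n+6)) := (hconv _ h6Icc).affine_preimage _
  have hS6open : IsOpen (γ ⁻¹' U (n+6)) := (hopen _ h6Icc).preimage hγc
  have h1S : (1:ℝ) ∈ γ ⁻¹' U (n+6) := by simp only [Set.mem_preimage, hγ1]; exact hq
  have h0S : (0:ℝ) ∈ γ ⁻¹' U (n+5) := by simp only [Set.mem_preimage, hγ0]; exact hp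
  set T : Set ℝ := γ ⁻¹' U (n+6) ∩ Set.Icc 0 1 with hT
  have hTne : T.Nonempty := ⟨1, h1S, by norm_num⟩
  have hTbdd : BddBelow T := ⟨0, fun t ht => ht.2.1⟩
  set b : ℝ := sInf T with hbdef
  have hb0 : 0 ≤ b := le_csInf hTne (fun t ht => ht.2.1)
  have hb1 : b ≤ 1 := csInf_le hTbdd ⟨h1S, by norm_num⟩
  have hγb4 : γ b ∈ U 4 := by
    have := (hconv _ h4Icc).segment_subset hp4 hq4
    apply this
    rw [segment_eq_image_lineMap]
    exact ⟨b, ⟨hb0, hb1⟩, rfl⟩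
  have hup : ∀ t : ℝ, b < t → t ≤ 1 → γ t ∈ U (n+6) := by
    intro t hbt ht1
    obtain ⟨s, hsT, hst⟩ := exists_lt_of_csInf_lt hTne hbt
    have hseg := hS6conv.segment_subset hsT.1 h1S
    rw [segment_eq_Icc hsT.2.2] at hseg
    exact hseg ⟨hst.le, ht1⟩
  intro z hz
  rw [segment_eq_image_lineMap] at hz
  obtain ⟨t, ⟨ht0, ht1⟩, rfl⟩ := hz
  show γ t ∈ U (n+5) ∪ U (n+6)
  by_cases hb6 : γ b ∈ U (n+6)
  · right
    have hbz : b = 0 := by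
      by_contra hbne
      have hbpos : 0 < b := lt_of_le_of_ne hb0 (Ne.symm hbne)
      obtain ⟨ε, hε, hball⟩ := Metric.isOpen_iff.mp hS6open b hb6
      have hsS : max (b - ε/2) 0 ∈ γ ⁻¹' U (n+6) := by
        apply hball
        rw [Metric.mem_ball, Real.dist_eq, abs_lt]
        constructor
        · have : b - ε/2 ≤ max (b - ε/2) 0 := le_max_left _ _
          linarith
        · have h1 : max (b - ε/2) 0 < b := max_lt (by linarith) hbpos
          linarith
      have hle : b ≤ max (b - ε/2) 0 :=
        csInf_le hTbdd ⟨hsS, ⟨le_max_right _ _, le_trans (max_le (by linarith) hb0) hb1⟩⟩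
      have : max (b - ε/2) 0 < b := max_lt (by linarith) hbpos
      linarith
    have h0S6 : (0:ℝ) ∈ γ ⁻¹' U (n+6) := hbz ▸ hb6
    have hseg := hS6conv.segment_subset h0S6 h1S
    rw [segment_eq_Icc (by norm_num : (0:ℝ) ≤ 1)] at hseg
    exact hseg ⟨ht0, ht1⟩
  · by_cases hb5 : γ b ∈ U (n+5)
    · rcases le_or_gt t b with h | h
      · left
        have hseg := hS5conv.segment_subset h0S hb5
        rw [segment_eq_Icc hb0] at hseg
        exact hseg ⟨ht0, h⟩
      · right; exact hup t h ht1
    · exfalso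
      have hblt1 : b < 1 := lt_of_le_of_ne hb1 (fun h => hb6 (by rw [h, hγ1]; exact hq))
      apply lmem34 hn (cw_mem hcode (γ b)) ⟨h4Icc, hγb4⟩
      intro j hj
      obtain ⟨hjIcc, hjU⟩ := hj
      have hopenj : IsOpen (γ ⁻¹' U j) := (hopen _ hjIcc).preimage hγc
      obtain ⟨ε, hε, hball⟩ := Metric.isOpen_iff.mp hopenj b hjU
      set t' : ℝ := min (b + ε/2) ((b+1)/2) with ht'def
      have ht'b : b < t' := lt_min (by linarith) (by linarith)
      have ht'1 : t' ≤ 1 := le_trans (min_le_right _ _) (by linarith)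
      have hjt' : γ t' ∈ U j := by
        apply hball
        rw [Metric.mem_ball, Real.dist_eq, abs_lt]
        have : t' ≤ b + ε/2 := min_le_left _ _
        constructor <;> linarith
      have h6t' : γ t' ∈ U (n+6) := hup t' ht'b ht'1
      have := lmem6 hn (cw_mem hcode (γ t')) ⟨h6Icc, h6t'⟩ (j := j) ⟨hjIcc, hjt'⟩
      rcases this with h|h|h|h
      · left; exact h
      · right; exact h
      · exact absurd (h ▸ hjU) hb5
      · exact absurd (h ▸ hjU) hb6

lemma cw_mem2 {X : Type*} {M : ℕ} {C : Set (Set ℕ)} {U : ℕ → Set X}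
    (hcode : codeOn M U = C) (p : X) :
    {i | i ∈ Set.Icc 1 M ∧ p ∈ U i} ∈ C := hcode ▸ ⟨p, rfl⟩

lemma phi_eq {X : Type*} {m : ℕ} (U V : ℕ → Set X)
    (hV : ∀ k, V k = if k = m + 6 then U (m+6) ∪ U (m+7) else U k)
    (p : X) (E E' : Set ℕ)
    (hE : {i | i ∈ Set.Icc 1 (m+7) ∧ p ∈ U i} = E)
    (himp : ∀ i, ((1 ≤ i ∧ i ≤ m+5 ∧ i ∈ E) ∨ (i = m+6 ∧ (m+6 ∈ E ∨ m+7 ∈ E))) ↔ i ∈ E') :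
    {i | i ∈ Set.Icc 1 (m+6) ∧ p ∈ V i} = E' := by
  have hUE : ∀ i, (1 ≤ i ∧ i ≤ m + 7 ∧ p ∈ U i) ↔ i ∈ E := by
    intro i
    rw [← hE]
    simp only [Set.mem_setOf_eq, Set.mem_Icc]
    tauto
  ext i
  simp only [Set.mem_setOf_eq, Set.mem_Icc, hV i]
  rw [← himp i]
  by_cases h : i = m + 6
  · subst h
    rw [if_pos rfl]
    simp only [Set.mem_union]
    constructor
    · rintro ⟨-, h | h⟩
      · exact Or.inr ⟨by trivial, Or.inl ((hUE (m+6)).mp ⟨by omega, by omega, h⟩)⟩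
      · exact Or.inr ⟨by trivial, Or.inr ((hUE (m+7)).mp ⟨by omega, by omega, h⟩)⟩
    · rintro (⟨-, hle, -⟩ | ⟨-, h | h⟩)
      · omega
      · exact ⟨⟨by omega, by omega⟩, Or.inl ((hUE (m+6)).mpr h).2.2⟩
      · exact ⟨⟨by omega, by omega⟩, Or.inr ((hUE (m+7)).mpr h).2.2⟩
  · rw [if_neg h]
    constructor
    · rintro ⟨⟨h1, h2⟩, h3⟩
      exact Or.inl ⟨h1, by omega, (hUE i).mp ⟨h1, by omega, h3⟩⟩
    · rintro (⟨h1, h2, h3⟩ | ⟨h4, -⟩)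
      · exact ⟨⟨h1, by omega⟩, ((hUE i).mpr h3).2.2⟩
      · exact absurd h4 h

lemma code_eq {X : Type*} {m : ℕ} (U V : ℕ → Set X)
    (hV : ∀ k, V k = if k = m + 6 then U (m+6) ∪ U (m+7) else U k)
    (hcode : codeOn (m+7) U = Lcode (m+1)) :
    codeOn (m+6) V = Lcode m := by
  ext σ
  constructor
  · rintro ⟨p, hp⟩
    have hτ := cw_mem2 hcode p
    have key : ∀ E' : Set ℕ,
        (∀ i, ((1 ≤ i ∧ i ≤ m+5 ∧ i ∈ ({i | i ∈ Set.Icc 1 (m+7) ∧ p ∈ U i} : Set ℕ)) ∨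
          (i = m+6 ∧ (m+6 ∈ ({i | i ∈ Set.Icc 1 (m+7) ∧ p ∈ U i} : Set ℕ) ∨
            m+7 ∈ ({i | i ∈ Set.Icc 1 (m+7) ∧ p ∈ U i} : Set ℕ)))) ↔ i ∈ E') →
        σ = E' := by
      intro E' himp
      rw [← hp, phi_eq U V hV p _ E' rfl himp]
    rcases lmem hτ with hE|hE|hE|hE|hE|hE|hE|hE|hE|⟨k,h1,h2,hE⟩|⟨k,h1,h2,hE⟩
    · rw [key ∅ (by simp only [hE]; simp)]
      exact lmem' (by tauto)
    · rw [key {1} (by simp only [hE, Set.mem_singleton_iff, or_true, true_or, and_true, true_and, or_false, false_or, and_false, false_and, or_self]; omega)]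
      exact lmem' (by tauto)
    · rw [key {2} (by simp only [hE, Set.mem_singleton_iff, or_true, true_or, and_true, true_and, or_false, false_or, and_false, false_and, or_self]; omega)]
      exact lmem' (by tauto)
    · rw [key {3} (by simp only [hE, Set.mem_singleton_iff, or_true, true_or, and_true, true_and, or_false, false_or, and_false, false_and, or_self]; omega)]
      exact lmem' (by tauto)
    · rw [key {1,2,3} (by simp only [hE, Set.mem_insert_iff, Set.mem_singleton_iff, Set.mem_empty_iff_false, or_true, true_or, and_true, true_and, or_false, false_or, and_false, false_and, or_self]; omega)]
      exact lmem' (by tauto)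
    · rw [key {1,4,5} (by simp only [hE, Set.mem_insert_iff, Set.mem_singleton_iff, Set.mem_empty_iff_false, or_true, true_or, and_true, true_and, or_false, false_or, and_false, false_and, or_self]; omega)]
      exact lmem' (by tauto)
    · rw [key {4,5} (by simp only [hE, Set.mem_insert_iff, Set.mem_singleton_iff, Set.mem_empty_iff_false, or_true, true_or, and_true, true_and, or_false, false_or, and_false, false_and, or_self]; omega)]
      exact lmem' (by tauto)
    · rw [key {2,4,5,6} (by simp only [hE, Set.mem_insert_iff, Set.mem_singleton_iff, Set.mem_empty_iff_false, or_true, true_or, and_true, true_and, or_false, false_or, and_false, false_and, or_self]; omega)]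
      exact lmem' (by tauto)
    · rw [key {3,4,m+6} (by simp only [hE, Set.mem_insert_iff, Set.mem_singleton_iff, Set.mem_empty_iff_false, or_true, true_or, and_true, true_and, or_false, false_or, and_false, false_and, or_self]; omega)]
      exact lmem' (by tauto)
    · rcases le_or_gt k (m+5) with hk | hk
      · rw [key {4,k} (by simp only [hE, Set.mem_insert_iff, Set.mem_singleton_iff, Set.mem_empty_iff_false, or_true, true_or, and_true, true_and, or_false, false_or, and_false, false_and, or_self]; omega)]
        exact lmem' (Or.inr (Or.inr (Or.inr (Or.inr (Or.inr (Or.inr (Or.inr (Or.inr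
          (Or.inr (Or.inl ⟨k, by omega, by omega, rfl⟩))))))))))
      · rw [key {4,m+6} (by simp only [hE, Set.mem_insert_iff, Set.mem_singleton_iff, Set.mem_empty_iff_false, or_true, true_or, and_true, true_and, or_false, false_or, and_false, false_and, or_self]; omega)]
        exact lmem' (Or.inr (Or.inr (Or.inr (Or.inr (Or.inr (Or.inr (Or.inr (Or.inr
          (Or.inr (Or.inl ⟨m+6, by omega, by omega, rfl⟩))))))))))
    · rcases le_or_gt k (m+5) with hk | hk
      · rw [key {4,k,k+1} (by simp only [hE, Set.mem_insert_iff, Set.mem_singleton_iff, Set.mem_empty_iff_false, or_true, true_or, and_true, true_and, or_false, false_or, and_false, false_and, or_self]; omega)]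
        exact lmem' (Or.inr (Or.inr (Or.inr (Or.inr (Or.inr (Or.inr (Or.inr (Or.inr
          (Or.inr (Or.inr ⟨k, by omega, by omega, rfl⟩))))))))))
      · have hk' : k = m + 6 := by omega
        rw [key {4,m+6} (by simp only [hE, hk', Set.mem_insert_iff, Set.mem_singleton_iff, Set.mem_empty_iff_false, or_true, true_or, and_true, true_and, or_false, false_or, and_false, false_and, or_self]; omega)]
        exact lmem' (Or.inr (Or.inr (Or.inr (Or.inr (Or.inr (Or.inr (Or.inr (Or.inr
          (Or.inr (Or.inl ⟨m+6, by omega, by omega, rfl⟩))))))))))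
  · intro hσ
    have get : ∀ E : Set ℕ, E ∈ Lcode (m+1) →
        (∀ i, ((1 ≤ i ∧ i ≤ m+5 ∧ i ∈ E) ∨ (i = m+6 ∧ (m+6 ∈ E ∨ m+7 ∈ E))) ↔ i ∈ σ) →
        σ ∈ codeOn (m+6) V := by
      intro E hEmem himp
      rw [← hcode] at hEmem
      obtain ⟨p, hp⟩ := hEmem
      exact ⟨p, phi_eq U V hV p E σ hp himp⟩
    rcases lmem hσ with hE|hE|hE|hE|hE|hE|hE|hE|hE|⟨k,h1,h2,hE⟩|⟨k,h1,h2,hE⟩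
    · exact get ∅ (lmem' (by tauto)) (by simp only [hE]; simp)
    · exact get {1} (lmem' (by tauto)) (by simp only [hE, Set.mem_singleton_iff, or_true, true_or, and_true, true_and, or_false, false_or, and_false, false_and, or_self]; omega)
    · exact get {2} (lmem' (by tauto)) (by simp only [hE, Set.mem_singleton_iff, or_true, true_or, and_true, true_and, or_false, false_or, and_false, false_and, or_self]; omega)
    · exact get {3} (lmem' (by tauto)) (by simp only [hE, Set.mem_singleton_iff, or_true, true_or, and_true, true_and, or_false, false_or, and_false, false_and, or_self]; omega)
    · exact get {1,2,3} (lmem' (by tauto))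
        (by simp only [hE, Set.mem_insert_iff, Set.mem_singleton_iff, Set.mem_empty_iff_false, or_true, true_or, and_true, true_and, or_false, false_or, and_false, false_and, or_self]; omega)
    · exact get {1,4,5} (lmem' (by tauto))
        (by simp only [hE, Set.mem_insert_iff, Set.mem_singleton_iff, Set.mem_empty_iff_false, or_true, true_or, and_true, true_and, or_false, false_or, and_false, false_and, or_self]; omega)
    · exact get {4,5} (lmem' (by tauto))
        (by simp only [hE, Set.mem_insert_iff, Set.mem_singleton_iff, Set.mem_empty_iff_false, or_true, true_or, and_true, true_and, or_false, false_or, and_false, false_and, or_self]; omega)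
    · exact get {2,4,5,6} (lmem' (by tauto))
        (by simp only [hE, Set.mem_insert_iff, Set.mem_singleton_iff, Set.mem_empty_iff_false, or_true, true_or, and_true, true_and, or_false, false_or, and_false, false_and, or_self]; omega)
    · exact get {3,4,m+1+6} (lmem' (by tauto))
        (by simp only [hE, Set.mem_insert_iff, Set.mem_singleton_iff, Set.mem_empty_iff_false, or_true, true_or, and_true, true_and, or_false, false_or, and_false, false_and, or_self]; omega)
    · exact get {4,k} (lmem' (Or.inr (Or.inr (Or.inr (Or.inr (Or.inr (Or.inr (Or.inr (Or.inr
          (Or.inr (Or.inl ⟨k, by omega, by omega, rfl⟩)))))))))))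
        (by simp only [hE, Set.mem_insert_iff, Set.mem_singleton_iff, Set.mem_empty_iff_false, or_true, true_or, and_true, true_and, or_false, false_or, and_false, false_and, or_self]; omega)
    · exact get {4,k,k+1} (lmem' (Or.inr (Or.inr (Or.inr (Or.inr (Or.inr (Or.inr (Or.inr (Or.inr
          (Or.inr (Or.inr ⟨k, by omega, by omega, rfl⟩)))))))))))
        (by simp only [hE, Set.mem_insert_iff, Set.mem_singleton_iff, Set.mem_empty_iff_false, or_true, true_or, and_true, true_and, or_false, false_or, and_false, false_and, or_self]; omega)


lemma mainAux {d : ℕ} (n : ℕ) (hn : 1 ≤ n)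
    (U : ℕ → Set (EuclideanSpace ℝ (Fin d)))
    (hconv : ∀ i ∈ Set.Icc 1 (n + 6), Convex ℝ (U i))
    (hopen : ∀ i ∈ Set.Icc 1 (n + 6), IsOpen (U i))
    (hcode : codeOn (n + 6) U = Lcode n)
    (V : ℕ → Set (EuclideanSpace ℝ (Fin d)))
    (hV : ∀ k, V k = if k = n + 5 then U (n + 5) ∪ U (n + 6) else U k) :
    Convex ℝ (V (n + 5)) ∧
    (∀ i ∈ Set.Icc 1 (n + 5), Convex ℝ (V i) ∧ IsOpen (V i)) ∧
    codeOn (n + 5) V = Lcode (n - 1) := by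
  have h5Icc : n + 5 ∈ Set.Icc 1 (n+6) := Set.mem_Icc.mpr ⟨by omega, by omega⟩
  have h6Icc : n + 6 ∈ Set.Icc 1 (n+6) := Set.mem_Icc.mpr ⟨by omega, by omega⟩
  have hVn5 : V (n+5) = U (n+5) ∪ U (n+6) := by rw [hV]; simp
  have hcv : Convex ℝ (V (n+5)) := by
    rw [hVn5, convex_iff_segment_subset]
    intro x hx y hy
    rcases hx with hx | hx <;> rcases hy with hy | hy
    · exact ((hconv _ h5Icc).segment_subset hx hy).trans Set.subset_union_left
    · exact seg_subset hn U hconv hopen hcode hx hy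
    · rw [segment_symm]; exact seg_subset hn U hconv hopen hcode hy hx
    · exact ((hconv _ h6Icc).segment_subset hx hy).trans Set.subset_union_right
  refine ⟨hcv, ?_, ?_⟩
  · intro i hi
    rw [Set.mem_Icc] at hi
    by_cases h : i = n + 5
    · subst h
      refine ⟨hcv, ?_⟩
      rw [hVn5]
      exact ((hopen _ h5Icc).union (hopen _ h6Icc))
    · have hi6 : i ∈ Set.Icc 1 (n+6) := Set.mem_Icc.mpr ⟨hi.1, by omega⟩
      rw [hV i, if_neg h]
      exact ⟨hconv _ hi6, hopen _ hi6⟩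
  · obtain ⟨m, rfl⟩ : ∃ m, n = m + 1 := ⟨n - 1, by omega⟩
    rw [show m + 1 + 5 = m + 6 from by omega, show m + 1 - 1 = m from by omega]
    refine code_eq U V ?_ ?_
    · intro k
      rw [hV k, show m + 1 + 5 = m + 6 from by omega, show m + 1 + 6 = m + 7 from by omega]
    · rw [show m + 7 = m + 1 + 6 from by omega]
      exact hcode

/-- Merging the last two sets of a convex open realization of `L n` yields a convex
open realization of `L (n-1)`; consequently if `L n` is open convex then so is
`L (n-1)`. -/
theorem stmt7 {d : ℕ} (n : ℕ) (hn : 1 ≤ n)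
    (U : ℕ → Set (EuclideanSpace ℝ (Fin d)))
    (hconv : ∀ i ∈ Set.Icc 1 (n + 6), Convex ℝ (U i))
    (hopen : ∀ i ∈ Set.Icc 1 (n + 6), IsOpen (U i))
    (hcode : codeOn (n + 6) U = Lcode n)
    (V : ℕ → Set (EuclideanSpace ℝ (Fin d)))
    (hV : ∀ k, V k = if k = n + 5 then U (n + 5) ∪ U (n + 6) else U k) :
    Convex ℝ (V (n + 5)) ∧
    (∀ i ∈ Set.Icc 1 (n + 5), Convex ℝ (V i) ∧ IsOpen (V i)) ∧
    codeOn (n + 5) V = Lcode (n - 1) ∧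
    (∀ d' : ℕ,
      (∃ W : ℕ → Set (EuclideanSpace ℝ (Fin d')),
        (∀ i ∈ Set.Icc 1 (n + 6), Convex ℝ (W i) ∧ IsOpen (W i)) ∧
        codeOn (n + 6) W = Lcode n) →
      (∃ W : ℕ → Set (EuclideanSpace ℝ (Fin d')),
        (∀ i ∈ Set.Icc 1 (n + 5), Convex ℝ (W i) ∧ IsOpen (W i)) ∧
        codeOn (n + 5) W = Lcode (n - 1))) := by
  obtain ⟨hc, ho, hcd⟩ := mainAux n hn U hconv hopen hcode V hV
  refine ⟨hc, ho, hcd, ?_⟩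
  rintro d' ⟨W, hW, hWcode⟩
  obtain ⟨-, ho', hcd'⟩ := mainAux n hn W (fun i hi => (hW i hi).1) (fun i hi => (hW i hi).2)
    hWcode (fun k => if k = n + 5 then W (n + 5) ∪ W (n + 6) else W k) (fun k => rfl)
  exact ⟨_, ho', hcd'⟩
end

section
/- Let A be an m×n real matrix of underlying rank one, i.e. there exists a real m×n matrix B with rank(B) ≤ 1 that has the same order of entries as A. Then for every pair of columns j, k, either (for all rows i, i′, A_{ij} < A_{i′j} implies A_{ik} ≤ A_{i′k}) or (for all rows i, i′, A_{ij} < A_{i′j} implies A_{ik} ≥ A_{i′k}); that is, the order of entries in each column is either the same as or the reverse of the order in any other column. The analogous statement holds for rows. -/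
/-- `B` has the same order of entries as `A`. -/
def SameOrder {m n : ℕ} (A B : Matrix (Fin m) (Fin n) ℝ) : Prop :=
  ∀ i j k l, A i j < A k l ↔ B i j < B k l

lemma key_cols {m n : ℕ} (B : Matrix (Fin m) (Fin n) ℝ) (hr : B.rank ≤ 1) (j k : Fin n) :
    (∀ i i' : Fin m, B i j < B i' j → B i k ≤ B i' k) ∨
    (∀ i i' : Fin m, B i j < B i' j → B i' k ≤ B i k) := by
  rw [Matrix.rank, finrank_le_one_iff] at hr
  obtain ⟨v, hv⟩ := hr
  obtain ⟨a, ha⟩ := hv ⟨B.mulVecLin (Pi.single j 1), ⟨_, rfl⟩⟩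
  obtain ⟨b, hb⟩ := hv ⟨B.mulVecLin (Pi.single k 1), ⟨_, rfl⟩⟩
  have hja : ∀ i, B i j = a * (v : Fin m → ℝ) i := by
    intro i
    have := congrFun (congrArg Subtype.val ha) i
    simpa [Matrix.mulVecLin, Matrix.mulVec_single] using this.symm
  have hkb : ∀ i, B i k = b * (v : Fin m → ℝ) i := by
    intro i
    have := congrFun (congrArg Subtype.val hb) i
    simpa [Matrix.mulVecLin, Matrix.mulVec_single] using this.symm
  rcases le_or_gt 0 (a * b) with hab | hab
  · left
    intro i i' hlt
    rw [hja, hja] at hlt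
    rw [hkb, hkb]
    nlinarith [sq_nonneg a, sq_nonneg ((v : Fin m → ℝ) i - (v : Fin m → ℝ) i')]
  · right
    intro i i' hlt
    rw [hja, hja] at hlt
    rw [hkb, hkb]
    nlinarith [sq_nonneg a]

/-- If `A` has underlying rank one (some matrix of rank at most one has the same order
of entries), then the order of entries in each column of `A` is either the same as or
the reverse of the order in any other column; similarly for rows. -/
theorem stmt10 {m n : ℕ} (A : Matrix (Fin m) (Fin n) ℝ)
    (h : ∃ B : Matrix (Fin m) (Fin n) ℝ, B.rank ≤ 1 ∧ SameOrder A B) :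
    (∀ j k : Fin n,
      (∀ i i' : Fin m, A i j < A i' j → A i k ≤ A i' k) ∨
      (∀ i i' : Fin m, A i j < A i' j → A i' k ≤ A i k)) ∧
    (∀ i i' : Fin m,
      (∀ j j' : Fin n, A i j < A i j' → A i' j ≤ A i' j') ∨
      (∀ j j' : Fin n, A i j < A i j' → A i' j' ≤ A i' j)) := by
  obtain ⟨B, hr, hso⟩ := h
  constructor
  · intro j k
    rcases key_cols B hr j k with hc | hc
    · left
      intro i i' hlt
      have hb := hc i i' ((hso i j i' j).mp hlt)
      by_contra hcon
      exact absurd ((hso i' k i k).mp (lt_of_not_ge hcon)) (not_lt.mpr hb)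
    · right
      intro i i' hlt
      have hb := hc i i' ((hso i j i' j).mp hlt)
      by_contra hcon
      exact absurd ((hso i k i' k).mp (lt_of_not_ge hcon)) (not_lt.mpr hb)
  · intro i i'
    have hrt : B.transpose.rank ≤ 1 := by rwa [Matrix.rank_transpose]
    rcases key_cols B.transpose hrt i i' with hc | hc
    · left
      intro j j' hlt
      have hb := hc j j' ((hso i j i j').mp hlt)
      by_contra hcon
      exact absurd ((hso i' j' i' j).mp (lt_of_not_ge hcon)) (not_lt.mpr hb)
    · right
      intro j j' hlt
      have hb := hc j j' ((hso i j i j').mp hlt)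
      by_contra hcon
      exact absurd ((hso i' j i' j').mp (lt_of_not_ge hcon)) (not_lt.mpr hb)
end

section
/- Let v_1, …, v_m ∈ ℝ^d and w_1, …, w_n ∈ ℝ^d, let f : ℝ → ℝ be strictly increasing, and let A be the m×n matrix with A_{ij} = f(⟨v_i, w_j⟩). If i is an extremal node of A — i.e., there is a column j such that A_{ij} < A_{kj} for all k ≠ i, or a column j such that A_{ij} > A_{kj} for all k ≠ i — then v_i is an extreme point of the convex hull of {v_1, …, v_m}. -/
/-!
A column `j` in which row `i` is the strict minimum (maximum) of `A` is, after cancelling the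
strictly increasing `f`, a linear functional `x ↦ ⟨x, w_j⟩` (resp. its negative) that is strictly
smaller at `v_i` than at every other `v_k`. The convex hull then lies in the convex set
`{v_i} ∪ {x | ℓ v_i < ℓ x}`, of which `v_i` is an extreme point.
-/

open Set

section ExtremePoints

variable {𝕜 E ι : Type*} [Field 𝕜] [LinearOrder 𝕜] [IsStrictOrderedRing 𝕜]
  [AddCommGroup E] [Module 𝕜 E]

theorem convex_insert_setOf_lt (l : E →ₗ[𝕜] 𝕜) (x : E) :
    Convex 𝕜 (insert x {y | l x < l y}) := by
  refine convex_iff_forall_pos.2 ?_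
  intro a ha b hb s t hs ht hst
  have hcomb : ∀ c : 𝕜, s * c + t * c = c := fun c ↦ by rw [← add_mul, hst, one_mul]
  rcases ha with rfl | ha <;> rcases hb with rfl | hb
  · left
    rw [← add_smul, hst, one_smul]
  all_goals
    right
    simp only [mem_ofPred_eq, map_add, map_smul, smul_eq_mul] at *
    nlinarith [hcomb (l a), hcomb (l b)]

theorem mem_extremePoints_insert_setOf_lt (l : E →ₗ[𝕜] 𝕜) (x : E) :
    x ∈ (insert x {y | l x < l y}).extremePoints 𝕜 := by
  rw [(convex_insert_setOf_lt l x).mem_extremePoints_iff_convex_sdiff,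
    insert_sdiff_self_of_notMem (s := {y | l x < l y}) (lt_irrefl (l x))]
  exact ⟨mem_insert x _, convex_halfSpace_gt l.isLinear _⟩

theorem mem_extremePoints_convexHull_of_forall_lt {s : Set E} {x : E} (hx : x ∈ s)
    (l : E →ₗ[𝕜] 𝕜) (h : ∀ y ∈ s, y ≠ x → l x < l y) :
    x ∈ (convexHull 𝕜 s).extremePoints 𝕜 := by
  have hsub : s ⊆ insert x {y | l x < l y} := fun y hy ↦
    (eq_or_ne y x).imp id (h y hy)
  exact inter_extremePoints_subset_extremePoints_of_subset
    (convexHull_min hsub (convex_insert_setOf_lt l x))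
    ⟨subset_convexHull 𝕜 s hx, mem_extremePoints_insert_setOf_lt l x⟩

theorem mem_extremePoints_convexHull_range_of_forall_lt {v : ι → E} {i : ι}
    (l : E →ₗ[𝕜] 𝕜) (h : ∀ k, k ≠ i → l (v i) < l (v k)) :
    v i ∈ (convexHull 𝕜 (range v)).extremePoints 𝕜 :=
  mem_extremePoints_convexHull_of_forall_lt (mem_range_self i) l <| by
    rintro _ ⟨k, rfl⟩ hk
    exact h k (ne_of_apply_ne v hk)

end ExtremePoints

/-- If `A_{ij} = f(⟨v_i, w_j⟩)` with `f` strictly increasing, and `i` is an extremal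
node of `A` (some column attains its unique minimum or unique maximum in row `i`),
then `v_i` is an extreme point of the convex hull of `{v_1, …, v_m}`. -/
theorem stmt12 {m n d : ℕ} (v : Fin m → Fin d → ℝ) (w : Fin n → Fin d → ℝ)
    (f : ℝ → ℝ) (hf : StrictMono f) (A : Matrix (Fin m) (Fin n) ℝ)
    (hA : ∀ i j, A i j = f (∑ k, v i k * w j k))
    (i : Fin m)
    (hext : (∃ j, ∀ k, k ≠ i → A i j < A k j) ∨ (∃ j, ∀ k, k ≠ i → A k j < A i j)) :
    v i ∈ Set.extremePoints ℝ (convexHull ℝ (Set.range v)) := by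
  have hA_dotProduct : ∀ k j, A k j = f (dotProductBilin ℝ ℝ (w j) (v k)) := fun k j ↦ by
    simp [hA, dotProduct, mul_comm]
  rcases hext with ⟨j, hj⟩ | ⟨j, hj⟩
  · refine mem_extremePoints_convexHull_range_of_forall_lt (dotProductBilin ℝ ℝ (w j)) ?_
    intro k hk
    simpa only [hA_dotProduct, hf.lt_iff_lt] using hj k hk
  · refine mem_extremePoints_convexHull_range_of_forall_lt (-dotProductBilin ℝ ℝ (w j)) ?_
    intro k hk
    simpa only [LinearMap.neg_apply, neg_lt_neg_iff, hA_dotProduct, hf.lt_iff_lt] using hj k hk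
end

section
/- Let A be an m×n real matrix admitting a rank-d representation: vectors v_1, …, v_m, w_1, …, w_n ∈ ℝ^d and a strictly increasing function f : ℝ → ℝ with A_{ij} = f(⟨v_i, w_j⟩). If ω ⊆ {1,…,m} is shattered by A, then the points {v_i : i ∈ ω} are affinely independent; in particular |ω| ≤ d + 1. Consequently, the Radon rank of A (the largest d such that some set of size d+1 is shattered by A) is a lower bound on the underlying rank of A. -/
/-- A set `σ` of row indices is swept by the matrix `A` if some column puts all rows in
`σ` strictly before (or strictly after) all rows outside `σ`. -/
def Swept {m n : ℕ} (A : Matrix (Fin m) (Fin n) ℝ) (σ : Set (Fin m)) : Prop :=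
  ∃ j, (∀ i ∈ σ, ∀ k ∉ σ, A i j < A k j) ∨ (∀ i ∈ σ, ∀ k ∉ σ, A k j < A i j)

/-- A set `ω` of row indices is shattered by `A` if every subset of `ω` is the
intersection of `ω` with some swept set. -/
def Shattered {m n : ℕ} (A : Matrix (Fin m) (Fin n) ℝ) (ω : Set (Fin m)) : Prop :=
  ∀ τ ⊆ ω, ∃ σ, Swept A σ ∧ τ = ω ∩ σ

lemma keylem {ι : Type*} (pos neg : Finset ι) (hp : pos.Nonempty) (hn : neg.Nonempty)
    (c b : ι → ℝ) (hcp : ∀ i ∈ pos, 0 < c i) (hcn : ∀ i ∈ neg, c i < 0)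
    (hsum : ∑ i ∈ pos, c i + ∑ i ∈ neg, c i = 0)
    (hb : ∀ p ∈ pos, ∀ q ∈ neg, b p < b q) :
    ∑ i ∈ pos, c i * b i + ∑ i ∈ neg, c i * b i < 0 := by
  obtain ⟨q0, hq0, hmin⟩ := neg.exists_min_image b hn
  have h1 : ∑ i ∈ pos, c i * b i < ∑ i ∈ pos, c i * b q0 := by
    refine Finset.sum_lt_sum_of_nonempty hp fun i hi => ?_
    exact mul_lt_mul_of_pos_left (hb i hi q0 hq0) (hcp i hi)
  have h2 : ∑ i ∈ neg, c i * b i ≤ ∑ i ∈ neg, c i * b q0 := by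
    refine Finset.sum_le_sum fun i hi => ?_
    exact mul_le_mul_of_nonpos_left (hmin i hi) (hcn i hi).le
  have : ∑ i ∈ pos, c i * b q0 + ∑ i ∈ neg, c i * b q0 = 0 := by
    rw [← Finset.sum_mul, ← Finset.sum_mul, ← add_mul, hsum, zero_mul]
  linarith

/-- If `A` admits a rank-`d` representation `A_{ij} = f(⟨v_i, w_j⟩)` and `ω` is
shattered by `A`, then `{v_i : i ∈ ω}` is affinely independent; in particular
`|ω| ≤ d + 1`. (Hence the Radon rank is a lower bound on the underlying rank.) -/
theorem stmt15 {m n d : ℕ} (v : Fin m → Fin d → ℝ) (w : Fin n → Fin d → ℝ)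
    (f : ℝ → ℝ) (hf : StrictMono f) (A : Matrix (Fin m) (Fin n) ℝ)
    (hA : ∀ i j, A i j = f (∑ k, v i k * w j k))
    (ω : Set (Fin m)) (hω : Shattered A ω) :
    AffineIndependent ℝ (fun i : ω => v i) ∧ ω.ncard ≤ d + 1 := by
  classical
  have hAI : AffineIndependent ℝ (fun i : ω => v i) := by
    rw [affineIndependent_iff]
    intro s c hsum hcomb
    by_contra hne
    push_neg at hne
    obtain ⟨i0, hi0s, hi0⟩ := hne
    set pos := s.filter (fun i => 0 < c i) with hposdef
    set neg := s.filter (fun i => c i < 0) with hnegdef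
    have hU : pos ∪ neg ⊆ s := by
      intro i hi
      rcases Finset.mem_union.1 hi with h | h <;> exact Finset.mem_of_mem_filter i h
    have hdisj : Disjoint pos neg := by
      rw [Finset.disjoint_left]
      intro i hi1 hi2
      have h1 := (Finset.mem_filter.1 hi1).2
      have h2 := (Finset.mem_filter.1 hi2).2
      linarith
    have e1 : ∀ g : ↥ω → ℝ, (∀ i, c i = 0 → g i = 0) →
        ∑ i ∈ s, g i = ∑ i ∈ pos, g i + ∑ i ∈ neg, g i := by
      intro g hg
      rw [← Finset.sum_union hdisj]
      refine (Finset.sum_subset hU fun i his hi => ?_).symm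
      rw [Finset.mem_union, Finset.mem_filter, Finset.mem_filter] at hi
      push_neg at hi
      exact hg i (le_antisymm (hi.1 his) (hi.2 his))
    have hsplit : ∑ i ∈ pos, c i + ∑ i ∈ neg, c i = 0 := by
      have h' := e1 c (fun _ h => h)
      rw [← h']
      exact hsum
    have hposne : pos.Nonempty ∧ neg.Nonempty := by
      rcases hi0.lt_or_gt with h | h
      · have hn : neg.Nonempty := ⟨i0, Finset.mem_filter.2 ⟨hi0s, h⟩⟩
        have hnlt : ∑ i ∈ neg, c i < 0 := by
          have := Finset.sum_lt_sum_of_nonempty hn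
            (f := c) (g := fun _ => (0:ℝ)) (fun i hi => (Finset.mem_filter.1 hi).2)
          simpa using this
        refine ⟨Finset.nonempty_iff_ne_empty.2 ?_, hn⟩
        intro h0
        rw [h0, Finset.sum_empty] at hsplit; linarith
      · have hp : pos.Nonempty := ⟨i0, Finset.mem_filter.2 ⟨hi0s, h⟩⟩
        have hplt : 0 < ∑ i ∈ pos, c i :=
          Finset.sum_pos (fun i hi => (Finset.mem_filter.1 hi).2) hp
        refine ⟨hp, Finset.nonempty_iff_ne_empty.2 ?_⟩
        intro h0
        rw [h0, Finset.sum_empty] at hsplit; linarith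
    obtain ⟨hp, hn⟩ := hposne
    -- the shattered subset
    set τ : Set (Fin m) := {i | ∃ h : i ∈ ω, (⟨i, h⟩ : ↥ω) ∈ pos} with hτdef
    have hτsub : τ ⊆ ω := fun i hi => hi.1
    obtain ⟨σ, ⟨j, hsw⟩, hτσ⟩ := hω τ hτsub
    set a : Fin m → ℝ := fun i => ∑ k, v i k * w j k with hadef
    have hposσ : ∀ i ∈ pos, (↑i : Fin m) ∈ σ := by
      intro i hi
      have : (↑i : Fin m) ∈ τ := ⟨i.2, by simpa using hi⟩
      rw [hτσ] at this
      exact this.2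
    have hnegσ : ∀ q ∈ neg, (↑q : Fin m) ∉ σ := by
      intro q hq hqσ
      have : (↑q : Fin m) ∈ τ := by rw [hτσ]; exact ⟨q.2, hqσ⟩
      obtain ⟨h, hmem⟩ := this
      have : q ∈ pos := by simpa using hmem
      have h1 := (Finset.mem_filter.1 this).2
      have h2 := (Finset.mem_filter.1 hq).2
      linarith
    have hdot : ∑ i ∈ s, c i * a ↑i = 0 := by
      have hk : ∀ k, ∑ i ∈ s, c i * v ↑i k = 0 := by
        intro k
        have := congrFun hcomb k
        simpa [Finset.sum_apply] using this
      calc ∑ i ∈ s, c i * a ↑i = ∑ i ∈ s, ∑ k, c i * v ↑i k * w j k := by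
            simp only [hadef, Finset.mul_sum, mul_assoc]
        _ = ∑ k, ∑ i ∈ s, c i * v ↑i k * w j k := Finset.sum_comm
        _ = ∑ k, (∑ i ∈ s, c i * v ↑i k) * w j k := by
            simp only [Finset.sum_mul]
        _ = 0 := by simp [hk]
    have hcp : ∀ i ∈ pos, 0 < c i := fun i hi => (Finset.mem_filter.1 hi).2
    have hcn : ∀ i ∈ neg, c i < 0 := fun i hi => (Finset.mem_filter.1 hi).2
    rcases hsw with hsw | hsw
    · have hb : ∀ p ∈ pos, ∀ q ∈ neg, a ↑p < a ↑q := by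
        intro p hpp q hqq
        have := hsw ↑p (hposσ p hpp) ↑q (hnegσ q hqq)
        rw [hA, hA] at this
        exact hf.lt_iff_lt.1 this
      have hkey := keylem pos neg hp hn c (fun i => a ↑i) hcp hcn hsplit hb
      rw [← e1 (fun i => c i * a ↑i) (fun i h => by simp [h]), hdot] at hkey
      exact lt_irrefl 0 hkey
    · have hb : ∀ p ∈ pos, ∀ q ∈ neg, -a ↑p < -a ↑q := by
        intro p hpp q hqq
        have := hsw ↑p (hposσ p hpp) ↑q (hnegσ q hqq)
        rw [hA, hA] at this
        have := hf.lt_iff_lt.1 this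
        linarith
      have hkey := keylem pos neg hp hn c (fun i => -a ↑i) hcp hcn hsplit hb
      have : ∑ i ∈ s, c i * -a ↑i = 0 := by
        have : ∑ i ∈ s, c i * -a ↑i = -∑ i ∈ s, c i * a ↑i := by
          rw [← Finset.sum_neg_distrib]; apply Finset.sum_congr rfl; intros; ring
        rw [this, hdot, neg_zero]
      rw [← e1 (fun i => c i * -a ↑i) (fun i h => by simp [h]), this] at hkey
      exact lt_irrefl 0 hkey
  refine ⟨hAI, ?_⟩
  have hfin : ω.Finite := Set.toFinite ω
  haveI : Fintype ↥ω := hfin.fintype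
  have hcard := hAI.card_le_finrank_succ
  have hle : Module.finrank ℝ (vectorSpan ℝ (Set.range fun i : ω => v i)) ≤ d := by
    have := Submodule.finrank_le (vectorSpan ℝ (Set.range fun i : ω => v i))
    rwa [Module.finrank_fin_fun] at this
  have : ω.ncard = Fintype.card ↥ω := by
    rw [Set.ncard_eq_toFinset_card', Set.toFinset_card]
  omega
end

section
/- Let A be an m×n real matrix and suppose some set ρ ⊆ {1,…,m} with |ρ| = d+1 is shattered by A. Then (1/2)·binom(d+1, ⌊(d+1)/2⌋) ≤ n. In other words, if A has Radon rank d, then its number of columns n satisfies this binomial lower bound. -/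
/-- If an `m × n` matrix `A` shatters a set of `d + 1` row indices (i.e. `A` has Radon
rank at least `d`), then `(1/2)·C(d+1, ⌊(d+1)/2⌋) ≤ n`. -/
theorem stmt16 {m n : ℕ} (A : Matrix (Fin m) (Fin n) ℝ) (d : ℕ)
    (ρ : Set (Fin m)) (hcard : ρ.ncard = d + 1) (hsh : Shattered A ρ) :
    ((d + 1).choose ((d + 1) / 2) : ℝ) / 2 ≤ n := by
  classical
  obtain ⟨σ0, hsw0, -⟩ := hsh ∅ (Set.empty_subset ρ)
  obtain ⟨j0, -⟩ := hsw0
  haveI : Nonempty (Fin n) := ⟨j0⟩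
  set k := (d + 1) / 2 with hk
  have hfin : ρ.Finite := Set.toFinite ρ
  have hρcard : hfin.toFinset.card = d + 1 := by
    rw [← Set.ncard_eq_toFinset_card ρ hfin, hcard]
  have key : ∀ τ : Finset (Fin m), (↑τ : Set (Fin m)) ⊆ ρ →
      ∃ p : Fin n × Bool, ∃ σ : Set (Fin m), (↑τ : Set (Fin m)) = ρ ∩ σ ∧
        ((p.2 = true ∧ ∀ i ∈ σ, ∀ k ∉ σ, A i p.1 < A k p.1) ∨
         (p.2 = false ∧ ∀ i ∈ σ, ∀ k ∉ σ, A k p.1 < A i p.1)) := by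
    intro τ hτ
    obtain ⟨σ, ⟨j, hj⟩, hτσ⟩ := hsh ↑τ hτ
    cases hj with
    | inl h => exact ⟨(j, true), σ, hτσ, Or.inl ⟨rfl, h⟩⟩
    | inr h => exact ⟨(j, false), σ, hτσ, Or.inr ⟨rfl, h⟩⟩
  let f : Finset (Fin m) → Fin n × Bool := fun τ =>
    if h : (↑τ : Set (Fin m)) ⊆ ρ then (key τ h).choose else Classical.arbitrary _
  have hf : ∀ τ : Finset (Fin m), ∀ h : (↑τ : Set (Fin m)) ⊆ ρ,
      ∃ σ : Set (Fin m), (↑τ : Set (Fin m)) = ρ ∩ σ ∧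
        (((f τ).2 = true ∧ ∀ i ∈ σ, ∀ k ∉ σ, A i (f τ).1 < A k (f τ).1) ∨
         ((f τ).2 = false ∧ ∀ i ∈ σ, ∀ k ∉ σ, A k (f τ).1 < A i (f τ).1)) := by
    intro τ h
    have : f τ = (key τ h).choose := dif_pos h
    rw [this]
    exact (key τ h).choose_spec
  have hinj : Set.InjOn f (hfin.toFinset.powersetCard k) := by
    intro τ₁ h₁ τ₂ h₂ heq
    rw [Finset.mem_coe, Finset.mem_powersetCard] at h₁ h₂
    obtain ⟨hsub₁, hc₁⟩ := h₁
    obtain ⟨hsub₂, hc₂⟩ := h₂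
    have hs₁ : (↑τ₁ : Set (Fin m)) ⊆ ρ := by
      intro x hx
      exact hfin.mem_toFinset.mp (hsub₁ hx)
    have hs₂ : (↑τ₂ : Set (Fin m)) ⊆ ρ := by
      intro x hx
      exact hfin.mem_toFinset.mp (hsub₂ hx)
    obtain ⟨σ₁, e₁, hd₁⟩ := hf τ₁ hs₁
    obtain ⟨σ₂, e₂, hd₂⟩ := hf τ₂ hs₂
    rw [heq] at hd₁
    have hcomp : σ₁ ⊆ σ₂ ∨ σ₂ ⊆ σ₁ := by
      by_contra hc
      push_neg at hc
      obtain ⟨i, hi1, hi2⟩ := Set.not_subset.mp hc.1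
      obtain ⟨l, hl2, hl1⟩ := Set.not_subset.mp hc.2
      rcases hd₁ with ⟨hb₁, h₁⟩ | ⟨hb₁, h₁⟩ <;> rcases hd₂ with ⟨hb₂, h₂⟩ | ⟨hb₂, h₂⟩
      · exact absurd (h₂ l hl2 i hi2) (not_lt.mpr (le_of_lt (h₁ i hi1 l hl1)))
      · rw [hb₁] at hb₂; exact Bool.noConfusion hb₂
      · rw [hb₁] at hb₂; exact Bool.noConfusion hb₂
      · exact absurd (h₂ l hl2 i hi2) (not_lt.mpr (le_of_lt (h₁ i hi1 l hl1)))
    rcases hcomp with h | h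
    · have : (↑τ₁ : Set (Fin m)) ⊆ ↑τ₂ := by
        rw [e₁, e₂]; exact Set.inter_subset_inter_right ρ h
      exact Finset.eq_of_subset_of_card_le (Finset.coe_subset.mp this) (hc₁ ▸ hc₂.le)
    · have : (↑τ₂ : Set (Fin m)) ⊆ ↑τ₁ := by
        rw [e₁, e₂]; exact Set.inter_subset_inter_right ρ h
      exact (Finset.eq_of_subset_of_card_le (Finset.coe_subset.mp this) (hc₂ ▸ hc₁.le)).symm
  have hcount : (hfin.toFinset.powersetCard k).card ≤ (Finset.univ : Finset (Fin n × Bool)).card :=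
    Finset.card_le_card_of_injOn f (fun _ _ => Finset.mem_univ _) hinj
  rw [Finset.card_powersetCard, hρcard, Finset.card_univ, Fintype.card_prod,
    Fintype.card_fin, Fintype.card_bool] at hcount
  rw [div_le_iff₀ (by norm_num : (0:ℝ) < 2)]
  exact_mod_cast hcount
end

section
/- Let B be an m×n real matrix, let f : ℝ → ℝ be strictly increasing, let A be the matrix with A_{ij} = f(B_{ij}), and let θ ∈ ℝ. Then there exists an m×n real matrix C with rank(C) ≤ rank(B) + 1 such that C_{ij} ≠ 0 for all i, j and C_{ij} > 0 ⇔ A_{ij} > θ. Consequently, for any matrix A of underlying rank r and any threshold θ, the sign matrix S(A,θ) defined by S(A,θ)_{ij} = sign(A_{ij} − θ) (with the convention sign(0) = −1) has sign rank at most r + 1. -/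
/-!
Shifting `B` by a constant matrix raises its rank by at most one. Since `A` increases with
`B`, every entry of `B` where `A ≤ θ` lies strictly below every entry where `A > θ`, so
some constant `t` separates these two finite sets of values, and `B - t` has the required
signs.
-/

theorem Matrix.rank_add_le {K m n : Type*} [Field K] [Fintype n] (A B : Matrix m n K) :
    (A + B).rank ≤ A.rank + B.rank := by
  rw [Matrix.rank, Matrix.rank, Matrix.rank, Matrix.mulVecLin_add]
  have hle : LinearMap.range (A.mulVecLin + B.mulVecLin) ≤
      LinearMap.range A.mulVecLin ⊔ LinearMap.range B.mulVecLin := by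
    rintro x ⟨v, rfl⟩
    exact Submodule.mem_sup.2 ⟨A.mulVecLin v, ⟨v, rfl⟩, B.mulVecLin v, ⟨v, rfl⟩, rfl⟩
  exact (Submodule.finrank_mono hle).trans (Submodule.finrank_add_le_finrank_add_finrank _ _)

theorem Matrix.rank_add_const_le {K m n : Type*} [Field K] [Fintype n] (A : Matrix m n K)
    (c : K) : (A + Matrix.of fun _ _ => c).rank ≤ A.rank + 1 := by
  have hconst : (Matrix.of fun (_ : m) (_ : n) => c) = vecMulVec (fun _ => c) (fun _ => 1) := by
    ext i j
    simp [vecMulVec_apply]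
  rw [hconst]
  exact (A.rank_add_le _).trans (Nat.add_le_add_left (rank_vecMulVec_le _ _) _)

theorem exists_threshold_of_lt_imp_lt {ι α β : Type*} [Finite ι] [LinearOrder α]
    [LinearOrder β] [DenselyOrdered β] [NoMaxOrder β] [NoMinOrder β] [Nonempty β]
    (a : ι → α) (b : ι → β) (hab : ∀ x y, a x < a y → b x < b y) (θ : α) :
    ∃ t, ∀ x, b x ≠ t ∧ (t < b x ↔ θ < a x) := by
  obtain ⟨t, hbelow, habove⟩ :=
    Set.Finite.exists_between' (Set.toFinite (b '' {x | a x ≤ θ}))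
      (Set.toFinite (b '' {x | θ < a x}))
      (by
        rintro _ ⟨x, hx, rfl⟩ _ ⟨y, hy, rfl⟩
        exact hab x y (lt_of_le_of_lt hx hy))
  refine ⟨t, fun x => ?_⟩
  rcases le_or_gt (a x) θ with hx | hx
  · have := hbelow _ ⟨x, hx, rfl⟩
    exact ⟨this.ne, iff_of_false this.not_gt hx.not_gt⟩
  · have := habove _ ⟨x, hx, rfl⟩
    exact ⟨this.ne', iff_of_true this hx⟩

theorem Matrix.exists_rank_le_succ_of_lt_imp_lt {m n : Type*} [Finite m] [Fintype n]
    (A B : Matrix m n ℝ) (hAB : ∀ i j k l, A i j < A k l → B i j < B k l) (θ : ℝ) :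
    ∃ C : Matrix m n ℝ, C.rank ≤ B.rank + 1 ∧ ∀ i j, C i j ≠ 0 ∧ (0 < C i j ↔ θ < A i j) := by
  obtain ⟨t, ht⟩ := exists_threshold_of_lt_imp_lt (fun p : m × n => A p.1 p.2)
    (fun p => B p.1 p.2) (fun p q => hAB p.1 p.2 q.1 q.2) θ
  refine ⟨B + Matrix.of fun _ _ => -t, B.rank_add_const_le _, fun i j => ?_⟩
  obtain ⟨hne, hlt⟩ := ht (i, j)
  simp only [Matrix.add_apply, Matrix.of_apply, ← sub_eq_add_neg, ne_eq, sub_eq_zero,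
    sub_pos]
  exact ⟨hne, hlt⟩

/-- If `A = f ∘ B` entrywise with `f` strictly increasing, then for any threshold `θ`
there is a matrix `C` of rank at most `rank B + 1` with no zero entries whose sign
pattern is that of `S(A, θ)` (positive exactly where `A_{ij} > θ`). Consequently, a
matrix of underlying rank at most `r` has `sign rank(S(A, θ)) ≤ r + 1` for every
threshold `θ`. -/
theorem stmt17 {m n : ℕ} (B : Matrix (Fin m) (Fin n) ℝ) (f : ℝ → ℝ) (hf : StrictMono f)
    (A : Matrix (Fin m) (Fin n) ℝ) (hA : ∀ i j, A i j = f (B i j)) (θ : ℝ) :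
    (∃ C : Matrix (Fin m) (Fin n) ℝ, C.rank ≤ B.rank + 1 ∧
      ∀ i j, C i j ≠ 0 ∧ (0 < C i j ↔ θ < A i j)) ∧
    (∀ (A' : Matrix (Fin m) (Fin n) ℝ) (θ' : ℝ) (r : ℕ),
      (∃ B' : Matrix (Fin m) (Fin n) ℝ, B'.rank ≤ r ∧
        ∀ i j k l, A' i j < A' k l ↔ B' i j < B' k l) →
      ∃ C : Matrix (Fin m) (Fin n) ℝ, C.rank ≤ r + 1 ∧
        ∀ i j, C i j ≠ 0 ∧ (0 < C i j ↔ θ' < A' i j)) := by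
  refine ⟨A.exists_rank_le_succ_of_lt_imp_lt B (fun i j k l => ?_) θ, ?_⟩
  · rw [hA, hA, hf.lt_iff_lt]
    exact id
  · rintro A' θ' r ⟨B', hB'r, hB'⟩
    obtain ⟨C, hCrank, hC⟩ :=
      A'.exists_rank_le_succ_of_lt_imp_lt B' (fun i j k l => (hB' i j k l).1) θ'
    exact ⟨C, hCrank.trans (Nat.add_le_add_right hB'r 1), hC⟩
end

section
/- Let A be the 3×3 matrix with rows (1, 3, 4), (2, 5, 8), (6, 7, 9). Then: (i) there is no real 3×3 matrix B with rank(B) ≤ 1 having the same order of entries as A; and (ii) there exists a real 3×3 matrix of rank 2 with the same order of entries as A. Hence the underlying rank of A equals 2, even though every column of A is in the same (increasing) order, so that the monotone rank of A is 1. -/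
/-- The matrix of Example "strict": rows (1,3,4), (2,5,8), (6,7,9). -/
noncomputable def Astrict : Matrix (Fin 3) (Fin 3) ℝ :=
  !![1, 3, 4; 2, 5, 8; 6, 7, 9]

noncomputable def Araised : Matrix (Fin 3) (Fin 3) ℝ :=
  !![1, 3, 4; 2, 5, 8; 6, 7, 24]

theorem Matrix.mul_eq_mul_of_rank_le_one {K m n : Type*} [Field K] [Fintype n]
    {A : Matrix m n K} (h : A.rank ≤ 1) (i k : m) (j l : n) :
    A i j * A k l = A i l * A k j := by
  rw [Matrix.rank_eq_finrank_span_cols] at h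
  have := FiniteDimensional.span_of_finite K (Set.finite_range A.col)
  obtain ⟨v, hv⟩ := finrank_le_one_iff.mp h
  choose c hc using fun j => hv ⟨A.col j, Submodule.subset_span (Set.mem_range_self j)⟩
  have hcol (i : m) (j : n) : A i j = c j * (v : m → K) i := by
    simpa using (congr_fun (congrArg Subtype.val (hc j)) i).symm
  rw [hcol, hcol, hcol, hcol]
  ring

lemma false_of_minors_of_lt_chain_of_pos {b c d e f g h : ℝ} (hbc : b < c) (hdf : d < f)
    (hef : e < f) (hfg : f < g) (hgh : g < h) (he : 0 < e)
    (hbg : b * g = e * f) (hch : c * h = d * e) : False := by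
  have key : e * (g * d - h * f) = g * h * (c - b) := by
    linear_combination (-g) * hch + h * hbg
  have hf : 0 < f := he.trans hef
  have hg : 0 < g := hf.trans hfg
  have hpos : 0 < e * (g * d - h * f) :=
    key ▸ mul_pos (mul_pos hg (hg.trans hgh)) (sub_pos.2 hbc)
  nlinarith [pos_of_mul_pos_right hpos he.le, mul_lt_mul_of_pos_left hdf hg,
    mul_lt_mul_of_pos_right hgh hf]

lemma false_of_minors_of_lt_chain {b c d e f g h : ℝ} (hbc : b < c) (hcd : c < d)
    (hde : d < e) (hef : e < f) (hfg : f < g) (hgh : g < h)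
    (hbg : b * g = e * f) (hch : c * h = d * e) : False := by
  rcases lt_trichotomy e 0 with he | rfl | he
  · exact false_of_minors_of_lt_chain_of_pos (b := -h) (c := -g) (d := -f) (e := -e) (f := -d)
      (g := -c) (h := -b) (neg_lt_neg hgh) (neg_lt_neg (hde.trans hef)) (neg_lt_neg hde)
      (neg_lt_neg hcd) (neg_lt_neg hbc) (neg_pos.2 he)
      (by linear_combination hch) (by linear_combination hbg)
  · have hb : b ≠ 0 := (hbc.trans (hcd.trans hde)).ne
    have hc : c ≠ 0 := (hcd.trans hde).ne
    have hg : g = 0 := by simpa [hb] using hbg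
    have hh : h = 0 := by simpa [hc] using hch
    exact hgh.ne (hg.trans hh.symm)
  · exact false_of_minors_of_lt_chain_of_pos hbc (hde.trans hef) hef hfg hgh he hbg hch

lemma not_sameOrder_Astrict_of_rank_le_one {B : Matrix (Fin 3) (Fin 3) ℝ} (hB : B.rank ≤ 1) :
    ¬ SameOrder Astrict B := by
  intro hord
  have lt (i j k l) (h : Astrict i j < Astrict k l := by norm_num [Astrict, Matrix.cons_val_two]) :
      B i j < B k l :=
    (hord i j k l).mp h
  exact false_of_minors_of_lt_chain (lt 1 0 0 1) (lt 0 1 0 2) (lt 0 2 1 1) (lt 1 1 2 0)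
    (lt 2 0 2 1) (lt 2 1 1 2)
    (Matrix.mul_eq_mul_of_rank_le_one hB 1 2 0 1) (Matrix.mul_eq_mul_of_rank_le_one hB 0 1 1 2)

lemma sameOrder_map_of_strictMono {m n : ℕ} (A : Matrix (Fin m) (Fin n) ℝ) {f : ℝ → ℝ}
    (hf : StrictMono f) : SameOrder A (A.map f) :=
  fun _ _ _ _ => hf.lt_iff_lt.symm

lemma Astrict_map_max_eq_Araised : Astrict.map (fun x => max x (16 * x - 120)) = Araised := by
  ext i j
  fin_cases i <;> fin_cases j <;> norm_num [Astrict, Araised, Matrix.cons_val_two]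

lemma Araised_rank : Araised.rank = 2 := by
  have hfac : Araised = (!![1, 3; 2, 5; 6, 7] : Matrix (Fin 3) (Fin 2) ℝ) *
      (!![1, 0, 4; 0, 1, 0] : Matrix (Fin 2) (Fin 3) ℝ) := by
    ext i j
    fin_cases i <;> fin_cases j <;> simp [Araised, Matrix.mul_apply, Fin.sum_univ_succ] <;> norm_num
  have hle : Araised.rank ≤ 2 :=
    hfac ▸ (Matrix.rank_mul_le_right _ _).trans (Matrix.rank_le_height _)
  have hgt : ¬ Araised.rank ≤ 1 := fun h => by
    have := Matrix.mul_eq_mul_of_rank_le_one h 0 1 0 1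
    norm_num [Araised] at this
  omega

lemma Astrict_col_strictMono (j : Fin 3) : StrictMono fun i => Astrict i j := by
  rw [Fin.strictMono_iff_lt_succ]
  fin_cases j <;> intro i <;> fin_cases i <;> norm_num [Astrict, Matrix.cons_val_two]

/-- (i) No matrix of rank at most one has the same order of entries as `Astrict`;
(ii) some rank-two matrix has the same order of entries as `Astrict` (so its underlying
rank is exactly 2); (iii) yet some matrix of rank at most one has the same order within
every column (so its monotone rank is 1). -/
theorem stmt18 :
    (¬ ∃ B : Matrix (Fin 3) (Fin 3) ℝ, B.rank ≤ 1 ∧ SameOrder Astrict B) ∧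
    (∃ B : Matrix (Fin 3) (Fin 3) ℝ, B.rank = 2 ∧ SameOrder Astrict B) ∧
    (∃ B : Matrix (Fin 3) (Fin 3) ℝ, B.rank ≤ 1 ∧
      ∀ j i k, Astrict i j < Astrict k j ↔ B i j < B k j) := by
  refine ⟨fun ⟨B, hB, hord⟩ => not_sameOrder_Astrict_of_rank_le_one hB hord,
    ⟨Araised, Araised_rank, ?_⟩,
    ⟨Matrix.vecMulVec (fun i => (i : ℝ)) 1, Matrix.rank_vecMulVec_le _ _, fun j i k => ?_⟩⟩
  · have hmax : StrictMono fun x : ℝ => max x (16 * x - 120) :=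
      fun _ _ h => max_lt_max h (by linarith)
    simpa [Astrict_map_max_eq_Araised] using sameOrder_map_of_strictMono Astrict hmax
  · simpa [Matrix.vecMulVec_apply] using (Astrict_col_strictMono j).lt_iff_lt
end
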